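/- arXiv:1304.7527 — 9 statements merged into one kernel-verified Lean document; each statement's English description precedes it below -/
import Mathlib

section
/- For every locally ringed space X there exist a locally ringed space X° with the same underlying topological space as X and a morphism t : X° ⟶ X whose underlying continuous map is the identity and all of whose stalk maps are surjective, such that X° is tidy and the following universal property holds: for every morphism φ : Y ⟶ X of locally ringed spaces with Y tidy, there exists a unique morphism φ° : Y ⟶ X° with t ∘ φ° = φ. -/
open AlgebraicGeometry CategoryTheory TopologicalSpace Opposite

/-- A locally ringed space is *tidy* if for every open `V`, every section `g` over `V` and
every point `x ∈ V`: if the germ of `g` at every point of `V` lies in every power of the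
maximal ideal of the stalk, then the germ of `g` at `x` is `0`. -/
def TidySpace (X : LocallyRingedSpace) : Prop :=
  ∀ (V : Opens X) (g : X.presheaf.obj (op V)) (x : X) (hx : x ∈ V),
    (∀ (x' : X) (hx' : x' ∈ V) (N : ℕ),
      X.presheaf.germ V x' hx' g ∈
        (IsLocalRing.maximalIdeal (X.presheaf.stalk x')) ^ N) →
    X.presheaf.germ V x hx g = 0

/-!
`𝒪_{X°}` is the image of `𝒪_X` in the sheaf of (discontinuous) sections of
`x ↦ 𝒪_{X,x} ⧸ ⋂ₙ 𝔪ₓⁿ`: its sections are the families that are locally the class of a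
section of `𝒪_X`. The comparison map `𝒪_X ⟶ 𝒪_{X°}` is locally surjective and its stalk
maps have kernel inside `⋂ₙ 𝔪ₓⁿ`, so the stalks of `X°` are local and their `𝔪ⁿ` are the
images of the `𝔪ₓⁿ`; this makes `X°` tidy. If `Y` is tidy, `φ♯` kills every section of `𝒪_X`
whose germs all lie in `⋂ₙ 𝔪ⁿ`, since local stalk maps preserve powers of maximal ideals; a
map of sheaves of rings that kills the kernel of a locally surjective map factors through it,
and this gives `φ°`. It is unique because `t` is a monomorphism: its base map is the identity
and its stalk maps are surjective.
-/

open TopCat TopCat.Presheaf IsLocalRing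

universe u v

noncomputable section

section LocalRing

variable {R S T : Type*} [CommRing R] [CommRing S] [CommRing T]

theorem IsLocalRing.map_mem_maximalIdeal_pow [IsLocalRing R] [IsLocalRing S] (f : R →+* S)
    [IsLocalHom f] {N : ℕ} {a : R} (ha : a ∈ maximalIdeal R ^ N) :
    f a ∈ maximalIdeal S ^ N := by
  have : f a ∈ (maximalIdeal R ^ N).map f := Ideal.mem_map_of_mem f ha
  rw [Ideal.map_pow] at this
  exact Ideal.pow_right_mono (map_maximalIdeal_le f) N this

theorem IsLocalRing.mem_maximalIdeal_pow_of_map_mem [IsLocalRing R] [IsLocalRing S] (f : R →+* S)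
    (hf : Function.Surjective f) {N : ℕ} (hker : RingHom.ker f ≤ maximalIdeal R ^ N) {a : R}
    (ha : f a ∈ maximalIdeal S ^ N) : a ∈ maximalIdeal R ^ N := by
  rwa [← map_maximalIdeal_of_surjective f hf, ← Ideal.map_pow, ← Ideal.mem_comap,
    Ideal.comap_map_of_surjective f hf, ← RingHom.ker_eq_comap_bot, sup_eq_left.mpr hker] at ha

theorem IsLocalRing.of_surjective_of_ker_le [IsLocalRing R] (f : R →+* S)
    (hf : Function.Surjective f) (hker : RingHom.ker f ≤ maximalIdeal R) : IsLocalRing S :=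
  have : Nontrivial S := ⟨1, 0, fun h ↦ (maximalIdeal.isMaximal R).ne_top <|
    (Ideal.eq_top_iff_one _).mpr (hker (by simp [RingHom.mem_ker, h]))⟩
  IsLocalRing.of_surjective' f hf

theorem isLocalHom_of_surjective_of_comp (f : R →+* S) (g : S →+* T) (hf : Function.Surjective f)
    [hgf : IsLocalHom (g.comp f)] : IsLocalHom g where
  map_nonunit b hb := by
    obtain ⟨a, rfl⟩ := hf b
    exact (isUnit_of_map_unit (g.comp f) a hb).map f

end LocalRing

section Gluing

open CategoryTheory.Limits

variable {C : Type u} [Category.{v} C] [HasColimits.{v} C] {FC : C → C → Type*}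
  {CC : C → Type v} [∀ X Y, FunLike (FC X Y) (CC X) (CC Y)] [ConcreteCategory.{v} C FC]
  [PreservesFilteredColimits (CategoryTheory.forget C)] [HasLimits C]
  [PreservesLimits (CategoryTheory.forget C)] [(CategoryTheory.forget C).ReflectsIsomorphisms]
  {X : TopCat.{v}}

theorem TopCat.Sheaf.exists_germ_eq_of_locally (F : TopCat.Sheaf C X) (U : Opens X)
    (v : ∀ x ∈ U, ToType (F.presheaf.stalk x))
    (hv : ∀ x ∈ U, ∃ (W : Opens X) (_ : x ∈ W) (i : W ⟶ U) (s : ToType (F.presheaf.obj (op W))),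
      ∀ z (hz : z ∈ W), F.presheaf.germ W z hz s = v z (i.le hz)) :
    ∃ u : ToType (F.presheaf.obj (op U)),
      ∀ x (hx : x ∈ U), F.presheaf.germ U x hx u = v x hx := by
  choose W hxW i s hs using hv
  have cover : U ≤ ⨆ x : U, W x x.2 := fun x hx ↦
    Opens.mem_iSup.mpr ⟨⟨x, hx⟩, hxW x hx⟩
  obtain ⟨u, hu, -⟩ :=
    F.existsUnique_gluing' (fun x : U ↦ W x x.2) U (fun x ↦ i x x.2) cover (fun x ↦ s x x.2)
      fun a b ↦ section_ext F _ _ _ fun z hz ↦ by simp only [germ_res_apply, hs]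
  refine ⟨u, fun x hx ↦ ?_⟩
  rw [← hs x hx x (hxW x hx), ← hu ⟨x, hx⟩, germ_res_apply]

end Gluing

namespace TopCat.Presheaf

variable {X : TopCat.{u}} {F G : X.Presheaf CommRingCat.{u}} {H : Sheaf CommRingCat.{u} X}
  (θ : F ⟶ G) (α : F ⟶ H.presheaf)

theorem stalkFunctor_map_eq_zero (hker : ∀ U s, θ.app U s = 0 → α.app U s = 0) {x : X}
    (a : F.stalk x) (ha : (stalkFunctor _ x).map θ a = 0) : (stalkFunctor _ x).map α a = 0 := by
  obtain ⟨U, hxU, s, rfl⟩ := F.exists_germ_eq a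
  rw [stalkFunctor_map_germ_apply] at ha ⊢
  obtain ⟨W, hxW, iU, iV, h⟩ := G.germ_eq x hxU hxU (θ.app _ s) 0 (ha.trans (map_zero _).symm)
  have : α.app _ (F.map iU.op s) = 0 :=
    hker _ _ ((NatTrans.naturality_apply _ _ _).trans (h.trans (map_zero _)))
  rw [← H.presheaf.germ_res_apply iU x hxW, ← NatTrans.naturality_apply, this]
  exact map_zero _

variable {θ} (hθ : IsLocallySurjective θ) (hker : ∀ U s, θ.app U s = 0 → α.app U s = 0)

def stalkLift (x : X) : G.stalk x ⟶ H.presheaf.stalk x :=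
  CommRingCat.ofHom <| RingHom.liftOfSurjective _
    ((locally_surjective_iff_surjective_on_stalks θ).mp hθ x)
    ⟨_, fun a ↦ stalkFunctor_map_eq_zero θ α hker a⟩

theorem stalkLift_stalkFunctor_map_apply (x : X) (a : F.stalk x) :
    stalkLift α hθ hker x ((stalkFunctor _ x).map θ a) = (stalkFunctor _ x).map α a :=
  RingHom.liftOfRightInverse_comp_apply _ _ _ _ a

theorem exists_germ_eq_stalkLift (U : Opens X) (t : G.obj (op U)) :
    ∃ u : H.presheaf.obj (op U), ∀ x (hx : x ∈ U),
      H.presheaf.germ U x hx u = stalkLift α hθ hker x (G.germ U x hx t) := by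
  refine TopCat.Sheaf.exists_germ_eq_of_locally H U _ fun x hx ↦ ?_
  obtain ⟨V, hVU, ⟨s, hs⟩, hxV⟩ := (isLocallySurjective_iff θ).mp hθ U t x hx
  refine ⟨V, hxV, homOfLE hVU, α.app _ s, fun z hz ↦ ?_⟩
  rw [← stalkFunctor_map_germ_apply, ← stalkLift_stalkFunctor_map_apply α hθ hker,
    stalkFunctor_map_germ_apply, hs]
  exact congrArg _ (G.germ_res_apply _ z hz t)

def sectionLift (U : Opens X) (t : G.obj (op U)) : H.presheaf.obj (op U) :=
  (exists_germ_eq_stalkLift α hθ hker U t).choose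

theorem germ_sectionLift (U : Opens X) (t : G.obj (op U)) (x : X) (hx : x ∈ U) :
    H.presheaf.germ U x hx (sectionLift α hθ hker U t) =
      stalkLift α hθ hker x (G.germ U x hx t) :=
  (exists_germ_eq_stalkLift α hθ hker U t).choose_spec x hx

def liftOfIsLocallySurjective : G ⟶ H.presheaf where
  app U := CommRingCat.ofHom
    { toFun := sectionLift α hθ hker U.unop
      map_zero' := section_ext H _ _ _ fun x hx ↦ by
        rw [germ_sectionLift, map_zero, map_zero, map_zero]
      map_one' := section_ext H _ _ _ fun x hx ↦ by
        rw [germ_sectionLift, map_one, map_one, map_one]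
      map_add' _ _ := section_ext H _ _ _ fun x hx ↦ by
        rw [map_add, germ_sectionLift, germ_sectionLift, germ_sectionLift, map_add, map_add]
      map_mul' _ _ := section_ext H _ _ _ fun x hx ↦ by
        rw [map_mul, germ_sectionLift, germ_sectionLift, germ_sectionLift, map_mul, map_mul] }
  naturality U V i := by
    ext t
    refine section_ext H _ _ _ fun x hx ↦ ?_
    simp only [CommRingCat.comp_apply, CommRingCat.hom_ofHom, RingHom.coe_mk, MonoidHom.coe_mk,
      OneHom.coe_mk, germ_res_apply', germ_sectionLift]

theorem comp_liftOfIsLocallySurjective : θ ≫ liftOfIsLocallySurjective α hθ hker = α := by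
  ext U s
  refine section_ext H _ _ _ fun x hx ↦ ?_
  rw [NatTrans.comp_app, CommRingCat.comp_apply]
  erw [germ_sectionLift]
  rw [← stalkFunctor_map_germ_apply, stalkLift_stalkFunctor_map_apply,
    stalkFunctor_map_germ_apply]

end TopCat.Presheaf

namespace AlgebraicGeometry.LocallyRingedSpace

theorem mono_of_injective_of_surjective_stalkMap {Z X : LocallyRingedSpace.{u}} (t : Z ⟶ X)
    (hbase : Function.Injective t.base) (hstalk : ∀ z, Function.Surjective (t.stalkMap z)) :
    Mono t where
  right_cancellation {Y} f g h := by
    have hb : f.base = g.base := by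
      ext y
      exact hbase congr(($h).base y)
    obtain ⟨⟨b, cf⟩, lf⟩ := f
    obtain ⟨⟨b', cg⟩, lg⟩ := g
    dsimp only at hb
    subst hb
    congr
    ext V s
    refine section_ext Y.sheaf _ _ _ fun y hy ↦ ?_
    obtain ⟨a, ha⟩ := hstalk (b y) (Z.presheaf.germ _ (b y) hy s)
    have key := congr($(stalkMap_congr_hom _ _ h y) a)
    rw [stalkMap_comp, stalkMap_comp] at key
    erw [stalkSpecializes_refl, Category.id_comp] at key
    replace key : Hom.stalkMap (⟨⟨b, cf⟩, lf⟩ : Y ⟶ Z) y (t.stalkMap (b y) a) =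
        Hom.stalkMap (⟨⟨b, cg⟩, lg⟩ : Y ⟶ Z) y (t.stalkMap (b y) a) := key
    rw [ha] at key
    exact (stalkMap_germ_apply (⟨⟨b, cf⟩, lf⟩ : Y ⟶ Z) V y hy s).symm.trans
      (key.trans (stalkMap_germ_apply (⟨⟨b, cg⟩, lg⟩ : Y ⟶ Z) V y hy s))

variable (X : LocallyRingedSpace.{u})

def infinitesimalIdeal (x : X) : Ideal (X.presheaf.stalk x) :=
  ⨅ n : ℕ, maximalIdeal (X.presheaf.stalk x) ^ n

theorem mem_infinitesimalIdeal_iff {x : X} {a : X.presheaf.stalk x} :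
    a ∈ X.infinitesimalIdeal x ↔ ∀ N : ℕ, a ∈ maximalIdeal (X.presheaf.stalk x) ^ N :=
  Submodule.mem_iInf _

abbrev TidyStalk (x : X) : Type u := X.presheaf.stalk x ⧸ X.infinitesimalIdeal x

def tidyGerms (U : Opens X) : X.presheaf.obj (op U) →+* ∀ x : U, X.TidyStalk x :=
  RingHom.pi fun x ↦ (Ideal.Quotient.mk _).comp (X.presheaf.germ U x.1 x.2).hom

theorem tidyGerms_apply (U : Opens X) (g : X.presheaf.obj (op U)) (x : U) :
    X.tidyGerms U g x = Ideal.Quotient.mk _ (X.presheaf.germ U x.1 x.2 g) :=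
  rfl

theorem tidyGerms_map {U V : Opens X} (i : V ⟶ U) (g : X.presheaf.obj (op U)) :
    X.tidyGerms V (X.presheaf.map i.op g) = fun x ↦ X.tidyGerms U g (i x) := by
  funext x
  rw [tidyGerms_apply, tidyGerms_apply, germ_res_apply]
  rfl

def isTidyGerms : PrelocalPredicate X.TidyStalk where
  pred {U} f := f ∈ Set.range (X.tidyGerms U)
  res i _ := by
    rintro ⟨g, rfl⟩
    exact ⟨X.presheaf.map i.op g, X.tidyGerms_map i g⟩

def tidySections (U : Opens X) : Subring (∀ x : U, X.TidyStalk x) where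
  carrier := {f | X.isTidyGerms.sheafify.pred f}
  zero_mem' := PrelocalPredicate.sheafifyOf ⟨0, map_zero _⟩
  one_mem' := PrelocalPredicate.sheafifyOf ⟨1, map_one _⟩
  neg_mem' := X.isTidyGerms.sheafify_inductionOn' (fun a ↦ -a) <| by
    rintro _ _ ⟨g, rfl⟩
    exact ⟨-g, map_neg _ g⟩
  add_mem' := X.isTidyGerms.sheafify_inductionOn₂' _ _ (· + ·) <| by
    rintro _ _ _ _ ⟨g, rfl⟩ ⟨g', rfl⟩
    refine ⟨X.presheaf.map (Opens.infLELeft _ _).op g +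
      X.presheaf.map (Opens.infLERight _ _).op g', ?_⟩
    rw [map_add, tidyGerms_map, tidyGerms_map]
    rfl
  mul_mem' := X.isTidyGerms.sheafify_inductionOn₂' _ _ (· * ·) <| by
    rintro _ _ _ _ ⟨g, rfl⟩ ⟨g', rfl⟩
    refine ⟨X.presheaf.map (Opens.infLELeft _ _).op g *
      X.presheaf.map (Opens.infLERight _ _).op g', ?_⟩
    rw [map_mul, tidyGerms_map, tidyGerms_map]
    rfl

def tidySheafInType : Sheaf (Type u) X.toTopCat := subsheafToTypes X.isTidyGerms.sheafify

instance (U : (Opens X)ᵒᵖ) : CommRing (X.tidySheafInType.presheaf.obj U) :=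
  (X.tidySections U.unop).toCommRing

def tidyPresheaf : X.toTopCat.Presheaf CommRingCat.{u} where
  obj U := CommRingCat.of (X.tidySheafInType.presheaf.obj U)
  map i := CommRingCat.ofHom
    { toFun := X.tidySheafInType.presheaf.map i
      map_zero' := rfl
      map_add' _ _ := rfl
      map_one' := rfl
      map_mul' _ _ := rfl }

theorem isSheaf_tidyPresheaf : X.tidyPresheaf.IsSheaf :=
  (isSheaf_iff_isSheaf_comp _ _).mpr <| isSheaf_of_iso
    (NatIso.ofComponents (fun _ ↦ Iso.refl _) fun _ ↦ rfl :
      X.tidySheafInType.presheaf ≅ X.tidyPresheaf ⋙ CategoryTheory.forget CommRingCat)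
    X.tidySheafInType.property

def toTidy : X.presheaf ⟶ X.tidyPresheaf where
  app U := CommRingCat.ofHom <| (X.tidyGerms U.unop).codRestrict (X.tidySections U.unop)
    fun g ↦ PrelocalPredicate.sheafifyOf ⟨g, rfl⟩
  naturality U V i := by
    ext g
    exact Subtype.ext (X.tidyGerms_map i.unop g)

theorem toTidy_isLocallySurjective : IsLocallySurjective X.toTidy := by
  refine (isLocallySurjective_iff _).mpr fun U s x hx ↦ ?_
  obtain ⟨W, hxW, i, g, hg⟩ := s.2 ⟨x, hx⟩
  exact ⟨W, i.le, ⟨g, Subtype.ext hg⟩, hxW⟩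

abbrev toTidyStalk (x : X) : X.presheaf.stalk x ⟶ X.tidyPresheaf.stalk x :=
  (stalkFunctor _ x).map X.toTidy

theorem toTidyStalk_surjective (x : X) : Function.Surjective (X.toTidyStalk x) :=
  (locally_surjective_iff_surjective_on_stalks _).mp X.toTidy_isLocallySurjective x

theorem ker_toTidyStalk_le (x : X) :
    RingHom.ker (X.toTidyStalk x).hom ≤ X.infinitesimalIdeal x := by
  intro a ha
  obtain ⟨U, hxU, g, rfl⟩ := X.presheaf.exists_germ_eq a
  replace ha : X.tidyPresheaf.germ U x hxU (X.toTidy.app _ g) = X.tidyPresheaf.germ U x hxU 0 :=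
    ((stalkFunctor_map_germ_apply _ _ _ _ _).symm.trans ha).trans (map_zero _).symm
  obtain ⟨W, hxW, iU, iV, h⟩ := X.tidyPresheaf.germ_eq x hxU hxU _ _ ha
  rw [map_zero, ← NatTrans.naturality_apply] at h
  have : Ideal.Quotient.mk _ (X.presheaf.germ W x hxW (X.presheaf.map iU.op g)) = 0 :=
    congr($h.1 ⟨x, hxW⟩)
  rwa [germ_res_apply, Ideal.Quotient.eq_zero_iff_mem] at this

theorem ker_toTidyStalk_le_maximalIdeal_pow (x : X) (N : ℕ) :
    RingHom.ker (X.toTidyStalk x).hom ≤ maximalIdeal _ ^ N :=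
  fun _ ha ↦ X.mem_infinitesimalIdeal_iff.mp (X.ker_toTidyStalk_le x ha) N

instance (x : X) : IsLocalRing (X.tidyPresheaf.stalk x) :=
  .of_surjective_of_ker_le _ (X.toTidyStalk_surjective x)
    (by simpa using X.ker_toTidyStalk_le_maximalIdeal_pow x 1)

def tidying : LocallyRingedSpace.{u} where
  carrier := X.toTopCat
  presheaf := X.tidyPresheaf
  IsSheaf := X.isSheaf_tidyPresheaf
  isLocalRing := inferInstance

def tidyingMapHom : X.tidying.toPresheafedSpace ⟶ X.toPresheafedSpace where
  base := 𝟙 X.toTopCat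
  c := X.toTidy

theorem tidyingMapHom_stalkMap (x : X) : X.tidyingMapHom.stalkMap x = X.toTidyStalk x := by
  refine X.presheaf.stalk_hom_ext fun U hxU ↦ ?_
  erw [PresheafedSpace.stalkMap_germ, stalkFunctor_map_germ]
  rfl

def tidyingMap : X.tidying ⟶ X where
  toHom := X.tidyingMapHom
  prop x := by
    erw [tidyingMapHom_stalkMap]
    exact .of_surjective _ (X.toTidyStalk_surjective x)

theorem tidyingMap_stalkMap (x : X) : X.tidyingMap.stalkMap x = X.toTidyStalk x :=
  X.tidyingMapHom_stalkMap x

instance : Mono X.tidyingMap :=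
  mono_of_injective_of_surjective_stalkMap _ Function.injective_id fun x ↦ by
    erw [tidyingMap_stalkMap]
    exact X.toTidyStalk_surjective x

theorem tidySpace_tidying : TidySpace X.tidying := by
  intro V s x hx hs
  suffices s = 0 by rw [this, map_zero]
  refine Subtype.ext (funext fun ⟨x', hx'V⟩ ↦ ?_)
  obtain ⟨W, hWV, ⟨g, hg⟩, hx'W⟩ :=
    (isLocallySurjective_iff _).mp X.toTidy_isLocallySurjective V s x' hx'V
  have hgerm :
      X.toTidyStalk x' (X.presheaf.germ W x' hx'W g) = X.tidyPresheaf.germ V x' hx'V s := by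
    erw [stalkFunctor_map_germ_apply, hg]
    exact X.tidyPresheaf.germ_res_apply _ _ _ s
  have hinf : X.presheaf.germ W x' hx'W g ∈ X.infinitesimalIdeal x' :=
    X.mem_infinitesimalIdeal_iff.mpr fun N ↦ mem_maximalIdeal_pow_of_map_mem _
      (X.toTidyStalk_surjective x') (X.ker_toTidyStalk_le_maximalIdeal_pow x' N)
      (hgerm ▸ hs x' hx'V N)
  calc s.1 ⟨x', hx'V⟩ = (X.toTidy.app _ g).1 ⟨x', hx'W⟩ := congr($hg.symm.1 ⟨x', hx'W⟩)
    _ = 0 := Ideal.Quotient.eq_zero_iff_mem.mpr hinf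

variable {X} {Y : LocallyRingedSpace.{u}} (φ : Y ⟶ X)

theorem app_eq_zero_of_toTidy_app_eq_zero (hY : TidySpace Y) (U : (Opens X)ᵒᵖ)
    (g : X.presheaf.obj U) (hg : X.toTidy.app U g = 0) : φ.c.app U g = 0 := by
  induction U with | op U => ?_
  have hinf (x) (hx : x ∈ U) : X.presheaf.germ _ x hx g ∈ X.infinitesimalIdeal x :=
    Ideal.Quotient.eq_zero_iff_mem.mp congr($hg.1 ⟨x, hx⟩)
  refine section_ext Y.sheaf _ _ _ fun y hy ↦ ?_
  refine (hY _ _ y hy fun y' hy' N ↦ ?_).trans (map_zero _).symm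
  have := map_mem_maximalIdeal_pow (φ.stalkMap y').hom
    (X.mem_infinitesimalIdeal_iff.mp (hinf _ hy') N)
  exact stalkMap_germ_apply φ U y' hy' g ▸ this

def tidyingLiftHom (hY : TidySpace Y) : Y.toPresheafedSpace ⟶ X.tidying.toPresheafedSpace where
  base := φ.base
  c := liftOfIsLocallySurjective (H := (Sheaf.pushforward _ φ.base).obj Y.sheaf) φ.c
    X.toTidy_isLocallySurjective (app_eq_zero_of_toTidy_app_eq_zero φ hY)

theorem tidyingLiftHom_comp (hY : TidySpace Y) :
    tidyingLiftHom φ hY ≫ X.tidyingMapHom = φ.toHom :=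
  PresheafedSpace.hext _ _ rfl <| heq_of_eq <| comp_liftOfIsLocallySurjective _ _ _

def tidyingLift (hY : TidySpace Y) : Y ⟶ X.tidying where
  toHom := tidyingLiftHom φ hY
  prop y := by
    have := φ.prop y
    rw [← tidyingLiftHom_comp φ hY, PresheafedSpace.stalkMap.comp] at this
    erw [tidyingMapHom_stalkMap] at this
    exact isLocalHom_of_surjective_of_comp _ _ (X.toTidyStalk_surjective _) (hgf := this)

theorem tidyingLift_comp (hY : TidySpace Y) : tidyingLift φ hY ≫ X.tidyingMap = φ :=
  Hom.ext' (tidyingLiftHom_comp φ hY)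

end AlgebraicGeometry.LocallyRingedSpace

end

/-- Existence of the tidying: for every locally ringed space `X` there is a tidy locally
ringed space `X°` with the same underlying topological space, together with a morphism
`t : X° ⟶ X` whose underlying continuous map is the identity and whose stalk maps are all
surjective, such that every morphism from a tidy locally ringed space to `X` factors
uniquely through `t`. -/
theorem exists_tidying (X : LocallyRingedSpace) :
    ∃ (Z : LocallyRingedSpace) (t : Z ⟶ X) (h : Z.toTopCat = X.toTopCat),
      t.base = eqToHom h ∧
      (∀ z : Z, Function.Surjective (t.stalkMap z)) ∧
      TidySpace Z ∧
      ∀ (Y : LocallyRingedSpace) (φ : Y ⟶ X), TidySpace Y →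
        ∃! φ' : Y ⟶ Z, φ' ≫ t = φ := by
  refine ⟨X.tidying, X.tidyingMap, rfl, rfl, fun z ↦ ?_, X.tidySpace_tidying,
    fun Y φ hY ↦ ⟨X.tidyingLift φ hY, X.tidyingLift_comp φ hY, fun ψ hψ ↦ ?_⟩⟩
  · erw [X.tidyingMap_stalkMap]
    exact X.toTidyStalk_surjective z
  · exact (cancel_mono X.tidyingMap).mp (hψ.trans (X.tidyingLift_comp φ hY).symm)
end

section
/- Let j : Y ⟶ X be a morphism of locally ringed spaces such that the underlying continuous map j₀ is a closed topological embedding and every stalk map j♯_y : O_{X,j₀(y)} → O_{Y,y} is surjective. If j is a tidy morphism, then the locally ringed space Y is tidy, i.e. for every open V ⊆ Y, every g ∈ O_Y(V), and every y ∈ V: if for all y' ∈ V and all N ∈ ℕ the germ of g at y' lies in m_{Y,y'}^N, then the germ of g at y is 0. -/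
/-!
Lift the germ of `g` at `y` through the surjective `j♯_y` to a section `f` of `O_X` near `j y`.
As `j` is an embedding, `f` can be taken on an open `U` such that `j♯ f = g` at every point of
`j⁻¹ U`. Surjectivity of the stalk maps turns `g ∈ m^N` into `f ∈ ker j♯ + m^N` there, so tidiness
of `j` gives `j♯ f = 0`, that is `g = 0`, at `y`.
-/

open AlgebraicGeometry CategoryTheory TopologicalSpace Opposite

/-- A morphism of locally ringed spaces is *tidy* if, for every open `U` in the target,
every section `f` over `U` and every point `w` of the source mapping into `U`: if at every
point `w'` mapping into `U` and every `N` the germ of `f` lies in `ker(φ♯_{w'}) + m^N`,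
then the germ of `f` at the image of `w` lies in `ker(φ♯_w)`. -/
def TidyMorphism {W X : LocallyRingedSpace} (φ : W ⟶ X) : Prop :=
  ∀ (U : Opens X) (f : X.presheaf.obj (op U)) (w : W) (hw : φ.base w ∈ U),
    (∀ (w' : W) (hw' : φ.base w' ∈ U) (N : ℕ),
      X.presheaf.germ U (φ.base w') hw' f ∈
        RingHom.ker (φ.stalkMap w').hom +
          (IsLocalRing.maximalIdeal (X.presheaf.stalk (φ.base w'))) ^ N) →
    X.presheaf.germ U (φ.base w) hw f ∈ RingHom.ker (φ.stalkMap w).hom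

lemma IsLocalRing.mem_ker_add_maximalIdeal_pow_of_surjective {R S : Type*} [CommRing R]
    [CommRing S] [IsLocalRing R] [IsLocalRing S] {f : R →+* S} (hf : Function.Surjective f)
    {a : R} {N : ℕ} (h : f a ∈ maximalIdeal S ^ N) :
    a ∈ RingHom.ker f + maximalIdeal R ^ N := by
  have ha : a ∈ (Ideal.map f (maximalIdeal R ^ N)).comap f := by
    rwa [Ideal.mem_comap, Ideal.map_pow, map_maximalIdeal_of_surjective f hf]
  rwa [Ideal.comap_map_of_surjective f hf, ← RingHom.ker_eq_comap_bot, sup_comm] at ha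

lemma AlgebraicGeometry.LocallyRingedSpace.Hom.exists_section_stalkMap_germ_eq
    {Y X : LocallyRingedSpace} (φ : Y ⟶ X) (hφ : Topology.IsInducing φ.base) {V : Opens Y}
    (g : Y.presheaf.obj (op V)) {y : Y} (hy : y ∈ V)
    (hg : Y.presheaf.germ V y hy g ∈ Set.range (φ.stalkMap y)) :
    ∃ (U : Opens X) (f : X.presheaf.obj (op U)) (_ : φ.base y ∈ U),
      ∀ (y' : Y) (hy' : φ.base y' ∈ U), ∃ hy'V : y' ∈ V,
        φ.stalkMap y' (X.presheaf.germ U (φ.base y') hy' f) = Y.presheaf.germ V y' hy'V g := by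
  obtain ⟨s, hs⟩ := hg
  obtain ⟨U, hyU, f, rfl⟩ := X.presheaf.exists_germ_eq s
  rw [LocallyRingedSpace.stalkMap_germ_apply] at hs
  obtain ⟨W, hyW, iU, iV, hfg⟩ := Y.presheaf.germ_eq y hyU hy _ _ hs
  obtain ⟨O, hO, hOW⟩ := hφ.isOpen_iff.mp W.isOpen
  have hOW' (y' : Y) : φ.base y' ∈ O ↔ y' ∈ W := Set.ext_iff.mp hOW y'
  refine ⟨U ⊓ ⟨O, hO⟩, X.presheaf.map (homOfLE inf_le_left).op f, ⟨hyU, (hOW' y).2 hyW⟩,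
    fun y' hy' => ⟨iV.le ((hOW' y').1 hy'.2), ?_⟩⟩
  rw [TopCat.Presheaf.germ_res_apply, LocallyRingedSpace.stalkMap_germ_apply,
    ← TopCat.Presheaf.germ_res_apply Y.presheaf iU y' ((hOW' y').1 hy'.2), hfg,
    TopCat.Presheaf.germ_res_apply]

/-- If `j : Y ⟶ X` is a closed embedding of locally ringed spaces with surjective stalk
maps which is a tidy morphism, then `Y` is a tidy locally ringed space. -/
theorem tidySpace_of_tidy_closedEmbedding {Y X : LocallyRingedSpace} (j : Y ⟶ X)
    (hemb : Topology.IsClosedEmbedding j.base)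
    (hsurj : ∀ y : Y, Function.Surjective (j.stalkMap y))
    (htidy : TidyMorphism j) :
    ∀ (V : Opens Y) (g : Y.presheaf.obj (op V)) (y : Y) (hy : y ∈ V),
      (∀ (y' : Y) (hy' : y' ∈ V) (N : ℕ),
        Y.presheaf.germ V y' hy' g ∈
          (IsLocalRing.maximalIdeal (Y.presheaf.stalk y')) ^ N) →
      Y.presheaf.germ V y hy g = 0 := by
  intro V g y hy hflat
  obtain ⟨U, f, hyU, hlift⟩ :=
    j.exists_section_stalkMap_germ_eq hemb.isInducing g hy (hsurj y _)
  have hker := htidy U f y hyU fun y' hy' N => by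
    obtain ⟨hy'V, hfg⟩ := hlift y' hy'
    exact IsLocalRing.mem_ker_add_maximalIdeal_pow_of_surjective (hsurj y')
      (hfg ▸ hflat y' hy'V N)
  obtain ⟨_, hfg⟩ := hlift y hyU
  rw [← hfg]
  exact hker
end

section
/- Let j : Z ⟶ Y and i : Y ⟶ X be morphisms of locally ringed spaces whose underlying continuous maps are closed topological embeddings and all of whose stalk maps are surjective. If j is a tidy morphism, then the composite i ∘ j : Z ⟶ X is a tidy morphism. -/
open AlgebraicGeometry CategoryTheory TopologicalSpace Opposite

theorem IsLocalRing.ker_comp_add_maximalIdeal_pow_le_comap {R S T : Type*} [CommRing R]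
    [IsLocalRing R] [CommRing S] [IsLocalRing S] [CommRing T] (φ : R →+* S) [IsLocalHom φ]
    (ψ : S →+* T) (N : ℕ) :
    RingHom.ker (ψ.comp φ) + maximalIdeal R ^ N ≤
      (RingHom.ker ψ + maximalIdeal S ^ N).comap φ := by
  rw [← RingHom.comap_ker, ← maximalIdeal_comap φ, Submodule.add_eq_sup, Submodule.add_eq_sup]
  exact (sup_le_sup_left (Ideal.le_comap_pow φ N) _).trans (Ideal.le_comap_sup φ)

theorem AlgebraicGeometry.LocallyRingedSpace.stalkMap_comp_hom {X Y Z : LocallyRingedSpace}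
    (f : X ⟶ Y) (g : Y ⟶ Z) (x : X) :
    ((f ≫ g).stalkMap x).hom = (f.stalkMap x).hom.comp (g.stalkMap (f.base x)).hom :=
  congrArg CommRingCat.Hom.hom (stalkMap_comp f g x)

theorem tidyMorphism_comp_general {Z Y X : LocallyRingedSpace} (j : Z ⟶ Y) (i : Y ⟶ X)
    (hj : TidyMorphism j) :
    TidyMorphism (j ≫ i) := by
  intro U f w hw h
  have hgerm (z : Z) (hz : (j ≫ i).base z ∈ U) :
      Y.presheaf.germ ((Opens.map i.base).obj U) (j.base z) hz (i.c.app (op U) f) =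
        i.stalkMap (j.base z) (X.presheaf.germ U _ hz f) :=
    (LocallyRingedSpace.stalkMap_germ_apply i U (j.base z) hz f).symm
  have hpullback := hj ((Opens.map i.base).obj U) (i.c.app (op U) f) w hw fun z hz N => by
    have hfz := h z hz N
    rw [LocallyRingedSpace.stalkMap_comp_hom] at hfz
    rw [hgerm z hz]
    exact IsLocalRing.ker_comp_add_maximalIdeal_pow_le_comap _ _ N hfz
  rw [hgerm w hw] at hpullback
  rw [LocallyRingedSpace.stalkMap_comp_hom]
  exact hpullback

/-- If `j : Z ⟶ Y` and `i : Y ⟶ X` are closed embeddings of locally ringed spaces (closed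
topological embeddings with surjective stalk maps) and `j` is tidy, then `i ∘ j` is tidy. -/
theorem tidyMorphism_comp {Z Y X : LocallyRingedSpace} (j : Z ⟶ Y) (i : Y ⟶ X)
    (hjemb : Topology.IsClosedEmbedding j.base)
    (hjsurj : ∀ z : Z, Function.Surjective (j.stalkMap z))
    (hiemb : Topology.IsClosedEmbedding i.base)
    (hisurj : ∀ y : Y, Function.Surjective (i.stalkMap y))
    (hj : TidyMorphism j) :
    TidyMorphism (j ≫ i) :=
  tidyMorphism_comp_general j i hj
end

section
/- Let j : Y ⟶ X be a morphism of locally ringed spaces whose underlying continuous map is a closed topological embedding and all of whose stalk maps are surjective. If the locally ringed space Y is tidy, then j is a tidy morphism. -/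
open AlgebraicGeometry CategoryTheory TopologicalSpace Opposite

/-! Pull `f` back to `g := j♯ f` on `j⁻¹ U`. The germ of `g` at `w'` is `j♯_{w'}` of the germ
of `f`, and a local homomorphism kills its kernel and maps `m^N` into `m^N`; so every germ of `g`
lies in every power of the maximal ideal, hence vanishes by tidiness of `Y`, which says exactly
that the germs of `f` lie in the kernels of the stalk maps. -/

open IsLocalRing in
theorem IsLocalHom.map_mem_maximalIdeal_pow_of_mem_ker_add {R S : Type*} [CommRing R]
    [CommRing S] [IsLocalRing R] [IsLocalRing S] (φ : R →+* S) [IsLocalHom φ] {x : R} {N : ℕ}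
    (hx : x ∈ RingHom.ker φ + maximalIdeal R ^ N) : φ x ∈ maximalIdeal S ^ N := by
  obtain ⟨a, ha, b, hb, rfl⟩ := Submodule.mem_sup.mp hx
  rw [map_add, RingHom.mem_ker.mp ha, zero_add]
  have hmap : φ b ∈ (maximalIdeal R ^ N).map φ := Ideal.mem_map_of_mem φ hb
  rw [Ideal.map_pow] at hmap
  exact Ideal.pow_right_mono (map_maximalIdeal_le φ) N hmap

theorem tidyMorphism_of_tidySpace_general {Y X : LocallyRingedSpace} (j : Y ⟶ X)
    (hY : TidySpace Y) :
    TidyMorphism j := by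
  intro U f w hw hmem
  rw [RingHom.mem_ker, LocallyRingedSpace.stalkMap_germ_apply]
  refine hY ((Opens.map j.base).obj U) (j.c.app (op U) f) w hw fun w' hw' N => ?_
  rw [← LocallyRingedSpace.stalkMap_germ_apply j U w' hw' f]
  exact IsLocalHom.map_mem_maximalIdeal_pow_of_mem_ker_add _ (hmem w' hw' N)

/-- If `j : Y ⟶ X` is a closed embedding of locally ringed spaces (closed topological
embedding with surjective stalk maps) and the locally ringed space `Y` is tidy, then
`j` is a tidy morphism. -/
theorem tidyMorphism_of_tidySpace {Y X : LocallyRingedSpace} (j : Y ⟶ X)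
    (hemb : Topology.IsClosedEmbedding j.base)
    (hsurj : ∀ y : Y, Function.Surjective (j.stalkMap y))
    (hY : TidySpace Y) :
    TidyMorphism j :=
  tidyMorphism_of_tidySpace_general j hY
end

section
/- Let R be a commutative local ring with maximal ideal m, and set m^∞ := ⋂_{N ≥ 1} m^N (an ideal of R). Let M be an R-module and M' ⊆ M a submodule. If the quotient ring R/m^∞ is Noetherian and the R-module M/(m^∞ M) is finitely generated, then m^∞ M + M' = ⋂_{N ≥ 0} (m^N M + M'). In particular this holds for M = R and M' any ideal of R. -/
open IsLocalRing

/-!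
Write `I = m^∞` and `K = I M + M'`. The quotient `M/K` is killed by `I`, so it is a finite
module over the Noetherian ring `R/I`, and Krull's intersection theorem there gives
`⋂ mⁿ (M/K) = 0`, i.e. `⋂ (mⁿ M + K) = K`. Since `I ⊆ mⁿ` for every `n`,
`mⁿ M + K = mⁿ M + M'`.
-/

theorem Ideal.iInf_pow_succ_le_pow {R : Type*} [CommSemiring R] (m : Ideal R) (n : ℕ) :
    ⨅ N : ℕ, m ^ (N + 1) ≤ m ^ n := by
  cases n with
  | zero => simp
  | succ n => exact iInf_le _ n

theorem Ideal.iInf_pow_smul_eq_bot_of_isTorsionBySet {R M : Type*} [CommRing R]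
    [AddCommGroup M] [Module R M] {I J : Ideal R} [IsNoetherianRing (R ⧸ I)]
    [Module.Finite R M] (hM : Module.IsTorsionBySet R M I) (hJ : J ≤ jacobson ⊥) :
    (⨅ n : ℕ, J ^ n • ⊤ : Submodule R M) = ⊥ := by
  let := hM.module
  have : IsScalarTower R (R ⧸ I) M := hM.isScalarTower
  have : Module.Finite (R ⧸ I) M := Module.Finite.of_restrictScalars_finite R _ M
  have hJ' : J.map (algebraMap R (R ⧸ I)) ≤ jacobson ⊥ := by
    rw [Quotient.algebraMap_eq, ← map_quotient_self I,
      ← map_jacobson_of_surjective Quotient.mk_surjective mk_ker.le]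
    exact map_mono (hJ.trans (jacobson_mono bot_le))
  have := congrArg (Submodule.restrictScalars R)
    (iInf_pow_smul_eq_bot_of_le_jacobson _ hJ' (M := M))
  simpa only [Submodule.restrictScalars_iInf, ← Ideal.map_pow, Ideal.smul_restrictScalars,
    Submodule.restrictScalars_top, Submodule.restrictScalars_bot] using this

theorem Submodule.comap_mkQ_smul_top {R M : Type*} [CommRing R] [AddCommGroup M] [Module R M]
    (I : Ideal R) (K : Submodule R M) : comap K.mkQ (I • ⊤) = I • ⊤ ⊔ K := by
  rw [sup_comm, ← comap_map_mkQ, map_smul'', map_top, range_mkQ]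

theorem Submodule.iInf_smul_top_sup_eq_of_quotient {R M : Type*} [CommRing R] [AddCommGroup M]
    [Module R M] {ι : Sort*} (I : ι → Ideal R) (K : Submodule R M)
    (h : (⨅ i, I i • ⊤ : Submodule R (M ⧸ K)) = ⊥) : ⨅ i, (I i • ⊤ ⊔ K) = K := by
  simp_rw [← comap_mkQ_smul_top, ← comap_iInf, h, comap_bot, ker_mkQ]

/-- Krull's theorem: let `R` be a commutative local ring with maximal ideal `m` and
`m^∞ = ⋂_{N ≥ 1} m^N`. If `R/m^∞` is Noetherian and `M/(m^∞ M)` is a finitely generated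
`R`-module, then for any submodule `M' ⊆ M` one has
`m^∞ M + M' = ⋂_{N ≥ 0} (m^N M + M')`. -/
theorem krull_theorem {R : Type*} [CommRing R] [IsLocalRing R]
    {M : Type*} [AddCommGroup M] [Module R M] (M' : Submodule R M)
    (hNoeth : IsNoetherianRing
      (R ⧸ (⨅ N : ℕ, (maximalIdeal R) ^ (N + 1))))
    (hFG : Module.Finite R
      (M ⧸ ((⨅ N : ℕ, (maximalIdeal R) ^ (N + 1)) • (⊤ : Submodule R M)))) :
    (⨅ N : ℕ, (maximalIdeal R) ^ (N + 1)) • (⊤ : Submodule R M) ⊔ M' =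
      ⨅ N : ℕ, ((maximalIdeal R) ^ N • (⊤ : Submodule R M) ⊔ M') := by
  set m := maximalIdeal R
  set I : Ideal R := ⨅ N : ℕ, m ^ (N + 1)
  set K : Submodule R M := I • ⊤ ⊔ M'
  have : Module.Finite R (M ⧸ K) :=
    Module.Finite.of_surjective _ (Submodule.factor_surjective le_sup_left)
  have hK : (⨅ n : ℕ, m ^ n • ⊤ : Submodule R (M ⧸ K)) = ⊥ :=
    Ideal.iInf_pow_smul_eq_bot_of_isTorsionBySet (I := I)
      ((Module.isTorsionBySet_quotient_iff K I).mpr fun _ _ hr ↦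
        Submodule.mem_sup_left (Submodule.smul_mem_smul hr Submodule.mem_top))
      (maximalIdeal_le_jacobson _)
  calc K = ⨅ n : ℕ, (m ^ n • ⊤ ⊔ K) :=
        (Submodule.iInf_smul_top_sup_eq_of_quotient _ K hK).symm
    _ = ⨅ n : ℕ, (m ^ n • ⊤ ⊔ M') := iInf_congr fun n ↦ by
      have hIK : I • ⊤ ≤ (m ^ n • ⊤ : Submodule R M) :=
        Submodule.smul_mono_left (m.iInf_pow_succ_le_pow n)
      rw [← sup_assoc, sup_eq_left.mpr hIK]
end

section
/- Let 𝕜 be ℝ or ℂ. Let U ⊆ ℝ^p be open, let f₁, …, f_n : U → ℝ be C^∞ (infinitely differentiable) functions, and set Y := {x ∈ U : f₁(x) = … = f_n(x) = 0}. Assume that for every x ∈ Y the derivatives Df₁(x), …, Df_n(x) ∈ (ℝ^p)^* are linearly independent. Then every point of Y has an open neighbourhood V ⊆ U with the following two properties: (1) for every C^∞ function g : V → 𝕜 with g = 0 on V ∩ Y there exist C^∞ functions g₁, …, g_n : V → 𝕜 such that g = Σ_{j=1}^n f_j g_j on V; (2) there exist C^∞ functions f_{n+1}, …, f_p : V → ℝ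 such that the map f = (f₁, …, f_p) : V → ℝ^p is a C^∞ diffeomorphism from V onto an open subset of ℝ^p. -/
/-!
Near the common zero `x`, complete `f₁, …, f_n` by `p - n` linear functions that are injective
on `ker Df(x)` to a map `Φ` with invertible derivative at `x`. By the inverse function theorem
`Φ` is a diffeomorphism from a neighbourhood `V` of `x` onto a ball, and it carries the zero set
to the coordinate subspace `{z₁ = ⋯ = z_n = 0}`. If `ρ` kills the first `n` coordinates and
`h = g ∘ Φ⁻¹` vanishes on that subspace, then
`h z = ∫₀¹ (d/dt) h (ρ z + t (z - ρ z)) dt = ∑ⱼ zⱼ ∫₀¹ ∂ⱼh (ρ z + t (z - ρ z)) dt`,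
and the integrals depend smoothly on `z`.
-/

open Set Function Filter MeasureTheory
open scoped ContDiff

theorem contDiffOn_integral_of_eq_zero_of_notMem {P G : Type*} [NormedAddCommGroup P]
    [NormedSpace ℝ P] [NormedAddCommGroup G] [NormedSpace ℝ G] {n : ℕ∞} {g : P → ℝ → G}
    {s : Set P} {k : Set ℝ} (hs : IsOpen s) (hk : IsCompact k) (hgk : ∀ p ∈ s, ∀ t ∉ k, g p t = 0)
    (hg : ContDiffOn ℝ n ↿g (s ×ˢ univ)) : ContDiffOn ℝ n (fun p => ∫ t, g p t) s := by
  -- `∫ t, g p t` is the convolution of the constant `1` with `g p`, evaluated at `0`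
  have := contDiffOn_convolution_right_with_param_comp (μ := volume)
    (ContinuousLinearMap.lsmul ℝ ℝ) (contDiffOn_const (c := (0 : ℝ))) hs hk
    (fun p t hp ht => hgk p hp t ht) (locallyIntegrable_const (1 : ℝ)) hg
  refine this.congr fun p _ => ?_
  simp [convolution_eq_swap]

namespace Real.smoothTransition

theorem contDiff_deriv : ContDiff ℝ ∞ (deriv smoothTransition) :=
  (contDiff_infty_iff_deriv.1 smoothTransition.contDiff).2

theorem deriv_eq_zero_of_notMem_Icc {t : ℝ} (ht : t ∉ Icc 0 1) :
    deriv smoothTransition t = 0 := by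
  rw [mem_Icc, not_and_or, not_le, not_le] at ht
  rcases ht with h | h
  · exact (EventuallyEq.deriv_eq (f := fun _ => (0 : ℝ)) (eventually_lt_nhds h |>.mono
      fun s hs => zero_of_nonpos hs.le)).trans (deriv_const t 0)
  · exact (EventuallyEq.deriv_eq (f := fun _ => (1 : ℝ)) (eventually_gt_nhds h |>.mono
      fun s hs => one_of_one_le hs.le)).trans (deriv_const t 1)

end Real.smoothTransition

theorem exists_contDiffOn_eq_apply_sub_of_comp_eq_zero {E F : Type*} [NormedAddCommGroup E]
    [NormedSpace ℝ E] [NormedAddCommGroup F] [NormedSpace ℝ F] [CompleteSpace F] {ρ : E → E}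
    (hρ : ContDiff ℝ ∞ ρ) {W : Set E} (hW : IsOpen W) {h : E → F} (hh : ContDiffOn ℝ ∞ h W)
    (hseg : ∀ z ∈ W, segment ℝ (ρ z) z ⊆ W) (hvan : ∀ z ∈ W, h (ρ z) = 0) :
    ∃ H : E → E →L[ℝ] F, ContDiffOn ℝ ∞ H W ∧ ∀ z ∈ W, h z = H z (z - ρ z) := by
  set φ := Real.smoothTransition
  -- the segment from `ρ z` to `z`, reparametrized to be constant outside `[0, 1]`: the
  -- integrand below then has compact support in `t` and is smooth in `(z, t)` on `W × ℝ`
  set γ : E → ℝ → E := fun z t => ρ z + φ t • (z - ρ z) with hγ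
  have hγW : ∀ z ∈ W, ∀ t, γ z t ∈ W := fun z hz t =>
    hseg z hz <| (segment_eq_image' ℝ (ρ z) z).symm ▸
      mem_image_of_mem _ ⟨Real.smoothTransition.nonneg t, Real.smoothTransition.le_one t⟩
  have hγ_smooth : ContDiff ℝ ∞ ↿γ :=
    (hρ.comp contDiff_fst).add ((Real.smoothTransition.contDiff.comp contDiff_snd).smul
      (contDiff_fst.sub (hρ.comp contDiff_fst)))
  have hDh : ContDiffOn ℝ ∞ (fderiv ℝ h) W := hh.fderiv_of_isOpen hW le_rfl
  set K : E → ℝ → E →L[ℝ] F := fun z t => deriv φ t • fderiv ℝ h (γ z t) with hK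
  have hK_smooth : ContDiffOn ℝ ∞ ↿K (W ×ˢ univ) :=
    (Real.smoothTransition.contDiff_deriv.comp contDiff_snd).contDiffOn.smul
      (hDh.comp hγ_smooth.contDiffOn fun q hq => hγW q.1 hq.1 q.2)
  have hK_zero : ∀ z, ∀ t ∉ Icc (0 : ℝ) 1, K z t = 0 := fun z t ht => by
    simp [hK, φ, Real.smoothTransition.deriv_eq_zero_of_notMem_Icc ht]
  refine ⟨fun z => ∫ t, K z t, contDiffOn_integral_of_eq_zero_of_notMem hW isCompact_Icc
    (fun z _ => hK_zero z) hK_smooth, fun z hz => ?_⟩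
  have hK_cont : Continuous (K z) := (hK_smooth.continuousOn.comp_continuous
    (continuous_const.prodMk continuous_id) fun t => ⟨hz, mem_univ t⟩)
  have hK_supp : HasCompactSupport (K z) := HasCompactSupport.intro isCompact_Icc (hK_zero z)
  have hderiv : ∀ t, HasDerivAt (fun s => h (γ z s)) (K z t (z - ρ z)) t := fun t => by
    have hφ : HasDerivAt φ (deriv φ t) t :=
      ((Real.smoothTransition.contDiff (n := 1)).differentiable one_ne_zero t).hasDerivAt
    have hh' : HasFDerivAt h (fderiv ℝ h (γ z t)) (γ z t) :=
      (hh.differentiableOn (by simp) _ (hγW z hz t)).differentiableAt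
        (hW.mem_nhds (hγW z hz t)) |>.hasFDerivAt
    have := hh'.comp_hasDerivAt t ((hφ.smul_const (z - ρ z)).const_add (ρ z))
    rwa [map_smul, ← _root_.smul_apply] at this
  calc h z = h (γ z 1) - h (γ z 0) := by simp [hγ, φ, hvan z hz]
    _ = ∫ t in (0 : ℝ)..1, K z t (z - ρ z) :=
      (intervalIntegral.integral_eq_sub_of_hasDerivAt (fun t _ => hderiv t)
        ((hK_cont.clm_apply continuous_const).intervalIntegrable 0 1)).symm
    _ = ∫ t, K z t (z - ρ z) := by
      rw [intervalIntegral.integral_of_le zero_le_one, ← integral_Icc_eq_integral_Ioc]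
      exact setIntegral_eq_integral_of_forall_compl_eq_zero fun t ht => by
        rw [hK_zero z t ht]; rfl
    _ = (∫ t, K z t) (z - ρ z) :=
      (ContinuousLinearMap.integral_apply (hK_cont.integrable_of_hasCompactSupport hK_supp) _).symm

theorem LinearMap.exists_injective_comp_add {K E F G : Type*} [Field K] [AddCommGroup E]
    [Module K E] [AddCommGroup F] [Module K F] [AddCommGroup G] [Module K G]
    [FiniteDimensional K E] [FiniteDimensional K G] {A : E →ₗ[K] F} (hA : Surjective A)
    {R : G →ₗ[K] F} {P : F →ₗ[K] G} (hRP : R ∘ₗ P = LinearMap.id)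
    (hEG : Module.finrank K E = Module.finrank K G) :
    ∃ Q : E →ₗ[K] G, R ∘ₗ Q = 0 ∧ Injective (P ∘ₗ A + Q) := by
  have hR : Surjective R := fun w => ⟨P w, congr($hRP w)⟩
  have hker : Module.finrank K (ker A) = Module.finrank K (ker R) := by
    have hA' := A.finrank_range_add_finrank_ker
    have hR' := R.finrank_range_add_finrank_ker
    rw [range_eq_top.2 hA, finrank_top] at hA'
    rw [range_eq_top.2 hR, finrank_top] at hR'
    omega
  obtain ⟨C, hC⟩ := Submodule.exists_isCompl (ker A)
  set e := LinearEquiv.ofFinrankEq _ _ hker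
  set Q := (ker R).subtype ∘ₗ e.toLinearMap ∘ₗ (ker A).projectionOnto C hC
  have hRQ : ∀ v, R (Q v) = 0 := fun v => (e _).2
  refine ⟨Q, LinearMap.ext hRQ, (injective_iff_map_eq_zero _).2 fun v hv => ?_⟩
  have hAv : A v = 0 := by
    simpa [hRQ, ← LinearMap.comp_apply R P, hRP] using congr(R $hv)
  have hQv : e ((ker A).projectionOnto C hC v) = 0 := by
    simpa [hAv, Q] using hv
  rw [e.map_eq_zero_iff, Submodule.projectionOnto_apply_of_mem_left hC hAv] at hQv
  exact congr(Subtype.val $hQv)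

theorem ContDiffOn.exists_openPartialHomeomorph {𝕂 E F : Type*} [RCLike 𝕂]
    [NormedAddCommGroup E] [NormedSpace 𝕂 E] [CompleteSpace E]
    [NormedAddCommGroup F] [NormedSpace 𝕂 F] {n : WithTop ℕ∞} {f : E → F} {U : Set E}
    {x : E} {f' : E ≃L[𝕂] F} (hf : ContDiffOn 𝕂 n f U) (hU : IsOpen U) (hn : 1 ≤ n)
    (hx : x ∈ U) (hf' : HasFDerivAt f (f' : E →L[𝕂] F) x) :
    ∃ e : OpenPartialHomeomorph E F, ⇑e = f ∧ x ∈ e.source ∧ e.source ⊆ U ∧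
      ContDiffOn 𝕂 n e.symm e.target := by
  have hn0 : n ≠ 0 := (lt_of_lt_of_le zero_lt_one hn).ne'
  have hfx : ContDiffAt 𝕂 n f x := hf.contDiffAt (hU.mem_nhds hx)
  -- shrink the source to where the derivative stays invertible, so `e.symm` is smooth everywhere
  set O := U ∩ fderiv 𝕂 f ⁻¹' range ((↑) : (E ≃L[𝕂] F) → E →L[𝕂] F)
  have hO : IsOpen O :=
    (hf.continuousOn_fderiv_of_isOpen hU hn).isOpen_inter_preimage hU ContinuousLinearEquiv.isOpen
  set e := (hfx.toOpenPartialHomeomorph f hf' hn0).restrOpen O hO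
  refine ⟨e, rfl, ⟨hfx.mem_toOpenPartialHomeomorph_source hf' hn0, hx, f', hf'.fderiv.symm⟩,
    fun y hy => hy.2.1, fun y hy => ?_⟩
  obtain ⟨hyU, g', hg'⟩ := (e.map_target hy).2
  have hd : HasFDerivAt e (g' : E →L[𝕂] F) (e.symm y) :=
    hg' ▸ ((hf.differentiableOn hn0).differentiableAt (hU.mem_nhds hyU)).hasFDerivAt
  exact (e.contDiffAt_symm hy hd (hf.contDiffAt (hU.mem_nhds hyU))).contDiffWithinAt

theorem ContinuousLinearMap.surjective_pi_of_linearIndependent {K E ι : Type*}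
    [NontriviallyNormedField K] [NormedAddCommGroup E] [NormedSpace K E] [Finite ι]
    {L : ι → E →L[K] K} (hL : LinearIndependent K L) : Surjective (ContinuousLinearMap.pi L) := by
  have hL' : LinearIndependent K fun i => ⇑(L i) :=
    hL.map' (LinearMap.ltoFun K E K K ∘ₗ ContinuousLinearMap.coeLM K)
      (LinearMap.ker_eq_bot.2 ContinuousLinearMap.coeFn_injective)
  have h := span_flip_eq_top_iff_linearIndependent.2 hL'
  rw [← ContinuousLinearMap.coe_coe, ← LinearMap.range_eq_top]
  rwa [← Submodule.span_eq (LinearMap.range _), LinearMap.coe_range]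

section Coordinates

variable {p n : ℕ} (hnp : n ≤ p)

theorem funLeft_castLE_comp_extendByZero :
    LinearMap.funLeft ℝ ℝ (Fin.castLE hnp) ∘ₗ ExtendByZero.linearMap ℝ (Fin.castLE hnp) =
      LinearMap.id := by
  ext a j
  simp [LinearMap.funLeft, (Fin.castLE_injective hnp).extend_apply]

theorem exists_openPartialHomeomorph_apply_castLE {U : Set (Fin p → ℝ)} (hU : IsOpen U)
    {f : Fin n → (Fin p → ℝ) → ℝ} (hf : ∀ j, ContDiffOn ℝ ∞ (f j) U) {x : Fin p → ℝ}
    (hx : x ∈ U) (hind : LinearIndependent ℝ fun j => fderiv ℝ (f j) x) :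
    ∃ e : OpenPartialHomeomorph (Fin p → ℝ) (Fin p → ℝ),
      (∀ y j, e y (Fin.castLE hnp j) = f j y) ∧ x ∈ e.source ∧ e.source ⊆ U ∧
        ContDiffOn ℝ ∞ e e.source ∧ ContDiffOn ℝ ∞ e.symm e.target := by
  set A := ContinuousLinearMap.pi fun j => fderiv ℝ (f j) x
  set R := LinearMap.funLeft ℝ ℝ (Fin.castLE hnp)
  set P := ExtendByZero.linearMap ℝ (Fin.castLE hnp)
  obtain ⟨Q, hRQ, hinj⟩ := LinearMap.exists_injective_comp_add (A := A.toLinearMap)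
    (ContinuousLinearMap.surjective_pi_of_linearIndependent hind)
    (funLeft_castLE_comp_extendByZero hnp) rfl
  set Φ : (Fin p → ℝ) → (Fin p → ℝ) := fun y => P (fun j => f j y) + Q y
  have hΦ : ContDiffOn ℝ ∞ Φ U :=
    (P.toContinuousLinearMap.contDiff.comp_contDiffOn (contDiffOn_pi.2 hf)).add
      Q.toContinuousLinearMap.contDiff.contDiffOn
  set Φ' := P.toContinuousLinearMap ∘L A + Q.toContinuousLinearMap
  have hΦ' : HasFDerivAt Φ Φ' x := by
    refine (P.toContinuousLinearMap.hasFDerivAt.comp x (hasFDerivAt_pi.2 fun j => ?_)).add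
      Q.toContinuousLinearMap.hasFDerivAt
    exact ((hf j).differentiableOn (by simp) x hx).differentiableAt (hU.mem_nhds hx)
      |>.hasFDerivAt
  obtain ⟨e, heΦ, hxe, heU, he_symm⟩ := hΦ.exists_openPartialHomeomorph hU (by simp) hx
    (f' := (LinearEquiv.ofInjectiveEndo _ hinj).toContinuousLinearEquiv) hΦ'
  refine ⟨e, fun y j => ?_, hxe, heU, heΦ ▸ hΦ.mono heU, he_symm⟩
  have hQ : Q y (Fin.castLE hnp j) = 0 := congr($hRQ y j)
  simp [heΦ, Φ, P, hQ, (Fin.castLE_injective hnp).extend_apply]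

theorem norm_sub_extendByZero_funLeft_castLE_le (z : Fin p → ℝ) :
    ‖z - ExtendByZero.linearMap ℝ (Fin.castLE hnp) (LinearMap.funLeft ℝ ℝ (Fin.castLE hnp) z)‖
      ≤ ‖z‖ := by
  refine (pi_norm_le_iff_of_nonneg (norm_nonneg z)).2 fun i => ?_
  by_cases hi : ∃ j, Fin.castLE hnp j = i
  · obtain ⟨j, rfl⟩ := hi
    simp [LinearMap.funLeft, (Fin.castLE_injective hnp).extend_apply]
  · simpa [extend_apply' _ _ _ hi] using norm_le_pi_norm z i

theorem exists_sum_smul_of_eq_zero_on_ball {F : Type*} [NormedAddCommGroup F]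
    [NormedSpace ℝ F] [CompleteSpace F] {c : Fin p → ℝ} (hc : ∀ j, c (Fin.castLE hnp j) = 0)
    {ε : ℝ} {h : (Fin p → ℝ) → F} (hh : ContDiffOn ℝ ∞ h (Metric.ball c ε))
    (hvan : ∀ z ∈ Metric.ball c ε, (∀ j, z (Fin.castLE hnp j) = 0) → h z = 0) :
    ∃ H : Fin n → (Fin p → ℝ) → F, (∀ j, ContDiffOn ℝ ∞ (H j) (Metric.ball c ε)) ∧
      ∀ z ∈ Metric.ball c ε, h z = ∑ j, z (Fin.castLE hnp j) • H j z := by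
  set R := LinearMap.funLeft ℝ ℝ (Fin.castLE hnp)
  set P := ExtendByZero.linearMap ℝ (Fin.castLE hnp)
  set ρ := LinearMap.id - P ∘ₗ R
  have hRP : R ∘ₗ P = LinearMap.id := funLeft_castLE_comp_extendByZero hnp
  have hRρ : ∀ z, R (ρ z) = 0 := fun z => by
    simp only [ρ, LinearMap.sub_apply, LinearMap.id_apply, LinearMap.comp_apply, map_sub]
    rw [← LinearMap.comp_apply R P, hRP, LinearMap.id_apply, sub_self]
  have hρc : ρ c = c := by
    have hRc : R c = 0 := funext hc
    simp only [ρ, LinearMap.sub_apply, LinearMap.id_apply, LinearMap.comp_apply, hRc, map_zero,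
      sub_zero]
  have hρW : ∀ z ∈ Metric.ball c ε, ρ z ∈ Metric.ball c ε := fun z hz => by
    rw [Metric.mem_ball, dist_eq_norm, ← hρc, ← map_sub]
    exact (norm_sub_extendByZero_funLeft_castLE_le hnp (z - c)).trans_lt hz
  obtain ⟨H, hH, hhH⟩ := exists_contDiffOn_eq_apply_sub_of_comp_eq_zero
    ρ.toContinuousLinearMap.contDiff Metric.isOpen_ball hh
    (fun z hz => (convex_ball c ε).segment_subset (hρW z hz) hz)
    (fun z hz => hvan _ (hρW z hz) fun j => congr($(hRρ z) j))
  refine ⟨fun j z => H z (P (Pi.single j 1)), fun j =>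
    (ContinuousLinearMap.apply ℝ F (P (Pi.single j 1))).contDiff.comp_contDiffOn hH,
    fun z hz => ?_⟩
  have hzρ : z - ρ z = P (R z) := by simp [ρ]
  rw [hhH z hz]
  change H z (z - ρ z) = _
  rw [hzρ, pi_eq_sum_univ' (R z)]
  simp only [map_sum, map_smul]
  rfl

end Coordinates

/-- Hadamard's lemma (smooth case, `𝕜`-valued functions for `𝕜 = ℝ` or `ℂ`): if
`f₁, …, f_n` are smooth real functions on an open set `U ⊆ ℝ^p` whose derivatives are
linearly independent at each common zero, then locally around each common zero `x` every
smooth `𝕜`-valued function vanishing on the common zero set is a combination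
`Σ f_j g_j` with smooth `g_j`; moreover the `f_j` can be completed to a smooth
diffeomorphism onto an open set. -/
theorem hadamard_lemma {𝕜 : Type*} [RCLike 𝕜] {p n : ℕ} (hnp : n ≤ p)
    (U : Set (Fin p → ℝ)) (hU : IsOpen U)
    (f : Fin n → (Fin p → ℝ) → ℝ)
    (hf : ∀ j, ContDiffOn ℝ (⊤ : ℕ∞) (f j) U)
    (hind : ∀ x ∈ U, (∀ j, f j x = 0) →
      LinearIndependent ℝ fun j => fderiv ℝ (f j) x)
    (x : Fin p → ℝ) (hxU : x ∈ U) (hxY : ∀ j, f j x = 0) :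
    ∃ V : Set (Fin p → ℝ), V ⊆ U ∧ IsOpen V ∧ x ∈ V ∧
      (∀ g : (Fin p → ℝ) → 𝕜, ContDiffOn ℝ (⊤ : ℕ∞) g V →
        (∀ y ∈ V, (∀ j, f j y = 0) → g y = 0) →
        ∃ G : Fin n → (Fin p → ℝ) → 𝕜,
          (∀ j, ContDiffOn ℝ (⊤ : ℕ∞) (G j) V) ∧
          ∀ y ∈ V, g y = ∑ j, algebraMap ℝ 𝕜 (f j y) * G j y) ∧
      ∃ F : Fin p → (Fin p → ℝ) → ℝ,
        (∀ j : Fin n, F (Fin.castLE hnp j) = f j) ∧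
        (∀ i, ContDiffOn ℝ (⊤ : ℕ∞) (F i) V) ∧
        IsOpen ((fun y i => F i y) '' V) ∧
        Set.InjOn (fun y i => F i y) V ∧
        ContDiffOn ℝ (⊤ : ℕ∞) (fun y i => F i y) V ∧
        ∃ Φinv : (Fin p → ℝ) → (Fin p → ℝ),
          ContDiffOn ℝ (⊤ : ℕ∞) Φinv ((fun y i => F i y) '' V) ∧
          ∀ y ∈ V, Φinv (fun i => F i y) = y := by
  obtain ⟨e, hef, hxe, heU, he, he_symm⟩ :=
    exists_openPartialHomeomorph_apply_castLE hnp hU hf hxU (hind x hxU hxY)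
  obtain ⟨ε, hε, hball⟩ := Metric.isOpen_iff.1 e.open_target (e x) (e.map_source hxe)
  set V := e.source ∩ e ⁻¹' Metric.ball (e x) ε
  have hVe : e '' V = Metric.ball (e x) ε := by
    rw [e.image_source_inter_eq', e.target_inter_inv_preimage_preimage, inter_eq_right.2 hball]
  have hsymmV : MapsTo e.symm (Metric.ball (e x) ε) V := fun z hz =>
    (e.symm_image_eq_source_inter_preimage hball).subset (mem_image_of_mem _ hz)
  refine ⟨V, fun y hy => heU hy.1, e.isOpen_inter_preimage Metric.isOpen_ball,
    ⟨hxe, Metric.mem_ball_self hε⟩, fun g hg hgY => ?_, fun i y => e y i,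
    fun j => funext fun y => hef y j, fun i => (contDiffOn_pi.1 he i).mono inter_subset_left,
    hVe ▸ Metric.isOpen_ball, e.injOn.mono inter_subset_left, he.mono inter_subset_left,
    e.symm, hVe ▸ he_symm.mono hball, fun y hy => e.left_inv hy.1⟩
  obtain ⟨H, hH, hgH⟩ := exists_sum_smul_of_eq_zero_on_ball hnp (c := e x)
    (fun j => (hef x j).trans (hxY j)) (h := g ∘ e.symm)
    (hg.comp (he_symm.mono hball) hsymmV)
    (fun z hz hz0 => hgY _ (hsymmV hz) fun j => by rw [← hef, e.right_inv (hball hz), hz0])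
  refine ⟨fun j y => H j (e y), fun j => (hH j).comp (he.mono inter_subset_left)
    fun y hy => hy.2, fun y hy => ?_⟩
  simpa [hef, e.left_inv hy.1, Algebra.smul_def] using hgH (e y) hy.2
end

section
/- Let 𝕜 be ℝ or ℂ and p ≥ 0. Let W ⊆ ℝ^p × ℝ^p be open and let g : W → 𝕜 be a C^∞ function with g(x, x) = 0 for every x ∈ ℝ^p with (x, x) ∈ W. Then every diagonal point (x, x) ∈ W has an open neighbourhood V ⊆ W on which there exist C^∞ functions k₁, …, k_p : V → 𝕜 such that g(x, y) = Σ_{j=1}^p (x_j − y_j) · k_j(x, y) for all (x, y) ∈ V. -/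
/-!
Multiplying `g` by a bump function that is `1` near `(x, x)` and supported in `W` turns it into a
smooth function `H` on all of `ℝ^p × ℝ^p` that still vanishes on the diagonal. The fundamental
theorem of calculus along the segment from `(y, y)` to `(x, y)` gives
`H (x, y) = ∫₀¹ DH (y + t (x - y), y) (x - y, 0) dt`, so one may take
`k_j (x, y) = ∫₀¹ ∂_{x_j} H (y + t (x - y), y) dt`, which is smooth by differentiation under the
integral sign.
-/

open Topology Set

section ParametricIntegral

variable {E F : Type*} [NormedAddCommGroup E] [NormedSpace ℝ E] [NormedAddCommGroup F]
  [NormedSpace ℝ F] {f : E × ℝ → F} {a b : ℝ}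

theorem hasFDerivAt_parametric_intervalIntegral (hf : ContDiff ℝ 1 f) (x₀ : E) :
    HasFDerivAt (fun x => ∫ t in a..b, f (x, t))
      (∫ t in a..b, fderiv ℝ f (x₀, t) ∘L .inl ℝ E ℝ) x₀ := by
  set f' : E × ℝ → E →L[ℝ] F := fun z => fderiv ℝ f z ∘L .inl ℝ E ℝ
  have hf' : Continuous f' := (hf.continuous_fderiv one_ne_zero).clm_comp continuous_const
  -- tube lemma over the compact `[a, b]`: `‖f' (x₀, t)‖ + 1` dominates `f'` near `x₀`
  have hnear : ∀ᶠ x in 𝓝 x₀, ∀ t ∈ uIcc a b, ‖f' (x, t) - f' (x₀, t)‖ < 1 := by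
    refine isCompact_uIcc.eventually_forall_of_forall_eventually fun t _ => ?_
    have hcont : Continuous fun z : E × ℝ => ‖f' z - f' (x₀, z.2)‖ :=
      (hf'.sub (hf'.comp (continuous_const.prodMk continuous_snd))).norm
    exact hcont.continuousAt.eventually_lt continuousAt_const (by simp)
  refine intervalIntegral.hasFDerivAt_integral_of_dominated_of_fderiv_le
    (F' := fun x t => f' (x, t)) (bound := fun t => ‖f' (x₀, t)‖ + 1) hnear ?_ ?_ ?_ ?_ ?_ ?_
  · exact .of_forall fun x =>
      (hf.continuous.comp (Continuous.prodMk_right x)).aestronglyMeasurable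
  · exact (hf.continuous.comp (Continuous.prodMk_right x₀)).intervalIntegrable _ _
  · exact (hf'.comp (Continuous.prodMk_right x₀)).aestronglyMeasurable
  · refine .of_forall fun t ht x hx => ?_
    have hxt := hx t (uIoc_subset_uIcc ht)
    calc ‖f' (x, t)‖ ≤ ‖f' (x, t) - f' (x₀, t)‖ + ‖f' (x₀, t)‖ := norm_le_norm_sub_add _ _
      _ ≤ ‖f' (x₀, t)‖ + 1 := by linarith
  · exact ((hf'.comp (Continuous.prodMk_right x₀)).norm.add
      continuous_const).intervalIntegrable _ _
  · refine .of_forall fun t _ x _ => ?_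
    exact (hf.differentiable one_ne_zero (x, t)).hasFDerivAt.comp x
      (hasFDerivAt_prodMk_left x t)

theorem contDiff_parametric_intervalIntegral [FiniteDimensional ℝ E] {n : ℕ∞}
    (hf : ContDiff ℝ n f) : ContDiff ℝ n fun x => ∫ t in a..b, f (x, t) := by
  suffices ∀ m : ℕ, ∀ f : E × ℝ → F, ContDiff ℝ m f →
      ContDiff ℝ m fun x => ∫ t in a..b, f (x, t) from
    contDiff_iff_forall_nat_le.mpr fun m hm => this m f (hf.of_le (by exact_mod_cast hm))
  -- differentiating in each direction `y` (possible as `E` is finite-dimensional) keeps the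
  -- codomain `F` fixed along the induction
  intro m
  induction m with
  | zero =>
    intro f hf
    exact contDiff_zero.mpr <|
      intervalIntegral.continuous_parametric_intervalIntegral_of_continuous'
        (f := fun x t => f (x, t)) hf.continuous a b
  | succ m ih =>
    intro f hf
    have hf1 : ContDiff ℝ 1 f := hf.of_le (by exact_mod_cast Nat.le_add_left 1 m)
    push_cast at hf ⊢
    refine contDiff_succ_iff_fderiv_apply.mpr
      ⟨fun x => (hasFDerivAt_parametric_intervalIntegral hf1 x).differentiableAt, by simp,
        fun y => ?_⟩
    have hderiv : (fun x => fderiv ℝ (fun x => ∫ t in a..b, f (x, t)) x y) =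
        fun x => ∫ t in a..b, fderiv ℝ f (x, t) (y, 0) := by
      funext x
      rw [(hasFDerivAt_parametric_intervalIntegral hf1 x).fderiv,
        ContinuousLinearMap.intervalIntegral_apply]
      · rfl
      · exact (((hf1.continuous_fderiv one_ne_zero).comp
          (Continuous.prodMk_right x)).clm_comp continuous_const).intervalIntegrable _ _
    rw [hderiv]
    exact ih _ ((hf.fderiv_right le_rfl).clm_apply contDiff_const)

end ParametricIntegral

theorem ContinuousLinearMap.apply_inl_eq_sum {ι G F : Type*} [Fintype ι] [DecidableEq ι]
    [NormedAddCommGroup G] [NormedSpace ℝ G] [NormedAddCommGroup F] [NormedSpace ℝ F]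
    (L : (ι → ℝ) × G →L[ℝ] F) (v : ι → ℝ) :
    L (v, 0) = ∑ j, v j • L (Pi.single j 1, 0) := by
  conv_lhs => rw [show L (v, 0) = (L ∘L .inl ℝ (ι → ℝ) G) v from rfl, pi_eq_sum_univ' v]
  simp [map_sum, map_smul]

theorem contDiff_smul_of_tsupport_subset {𝕜 E F : Type*} [NontriviallyNormedField 𝕜]
    [NormedAddCommGroup E] [NormedSpace 𝕜 E] [NormedAddCommGroup F] [NormedSpace 𝕜 F]
    {n : WithTop ℕ∞} {χ : E → 𝕜} {g : E → F} {W : Set E} (hW : IsOpen W)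
    (hχ : ContDiff 𝕜 n χ) (hg : ContDiffOn 𝕜 n g W) (hχW : tsupport χ ⊆ W) :
    ContDiff 𝕜 n fun z => χ z • g z := by
  refine contDiff_iff_contDiffAt.mpr fun z => ?_
  by_cases hz : z ∈ W
  · exact hχ.contDiffAt.smul (hg.contDiffAt (hW.mem_nhds hz))
  · have hz' : z ∉ tsupport fun z => χ z • g z :=
      fun h => hz (hχW (tsupport_smul_subset_left _ _ h))
    exact contDiffAt_const.congr_of_eventuallyEq (notMem_tsupport_iff_eventuallyEq.mp hz')

section DiagonalHadamard

variable {E F : Type*} [NormedAddCommGroup E] [NormedSpace ℝ E] [NormedAddCommGroup F]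
  [NormedSpace ℝ F] {h : E × E → F}

noncomputable def diagonalHadamardKernel (h : E × E → F) (q : E × E) : E × E →L[ℝ] F :=
  ∫ t in (0 : ℝ)..1, fderiv ℝ h (q.2 + t • (q.1 - q.2), q.2)

theorem eq_diagonalHadamardKernel_apply [CompleteSpace F] (hh : ContDiff ℝ 1 h)
    (hdiag : ∀ y, h (y, y) = 0) (q : E × E) :
    h q = diagonalHadamardKernel h q (q.1 - q.2, 0) := by
  have key := map_add_eq_sum_add_integral_iteratedFDeriv (n := 0) (f := h) (x := (q.2, q.2))
    (y := (q.1 - q.2, 0)) fun t _ => hh.contDiffAt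
  simp only [Prod.mk_add_mk, add_sub_cancel, add_zero, Prod.mk.eta, zero_add, Finset.range_one,
    Finset.sum_singleton, Nat.factorial_zero, Nat.cast_one, inv_one, iteratedFDeriv_zero_apply,
    one_smul, pow_zero, Nat.reduceAdd, Prod.smul_mk, smul_zero, iteratedFDeriv_one_apply] at key
  rw [key, hdiag, zero_add, diagonalHadamardKernel, ContinuousLinearMap.intervalIntegral_apply]
  exact ((hh.continuous_fderiv one_ne_zero).comp (by fun_prop)).intervalIntegrable _ _

theorem contDiff_diagonalHadamardKernel [FiniteDimensional ℝ E] {n m : ℕ∞}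
    (hh : ContDiff ℝ n h) (hmn : m + 1 ≤ n) : ContDiff ℝ m (diagonalHadamardKernel h) :=
  contDiff_parametric_intervalIntegral (f := fun z : (E × E) × ℝ =>
      fderiv ℝ h (z.1.2 + z.2 • (z.1.1 - z.1.2), z.1.2))
    ((hh.fderiv_right (by exact_mod_cast hmn)).comp (by fun_prop))

end DiagonalHadamard

open Metric in
/-- Diagonal Hadamard lemma: if `g` is a smooth `𝕜`-valued function (`𝕜 = ℝ` or `ℂ`)
on an open set `W ⊆ ℝ^p × ℝ^p` vanishing on the diagonal, then around every diagonal
point of `W` there are an open neighbourhood `V ⊆ W` and smooth functions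
`k₁, …, k_p` on `V` with `g (x, y) = Σ_j (x_j − y_j) · k_j (x, y)` on `V`. -/
theorem diagonal_hadamard {𝕜 : Type*} [RCLike 𝕜] {p : ℕ}
    (W : Set ((Fin p → ℝ) × (Fin p → ℝ))) (hW : IsOpen W)
    (g : (Fin p → ℝ) × (Fin p → ℝ) → 𝕜)
    (hg : ContDiffOn ℝ (⊤ : ℕ∞) g W)
    (hdiag : ∀ x : Fin p → ℝ, (x, x) ∈ W → g (x, x) = 0)
    (x : Fin p → ℝ) (hx : (x, x) ∈ W) :
    ∃ V : Set ((Fin p → ℝ) × (Fin p → ℝ)), V ⊆ W ∧ IsOpen V ∧ (x, x) ∈ V ∧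
      ∃ k : Fin p → ((Fin p → ℝ) × (Fin p → ℝ)) → 𝕜,
        (∀ j, ContDiffOn ℝ (⊤ : ℕ∞) (k j) V) ∧
        ∀ q ∈ V, g q = ∑ j, algebraMap ℝ 𝕜 (q.1 j - q.2 j) * k j q := by
  obtain ⟨r, hr, hrW⟩ := isOpen_iff.mp hW (x, x) hx
  let χ : ContDiffBump (x, x) := ⟨r / 3, r / 2, by positivity, by linarith⟩
  have hχW : tsupport χ ⊆ W :=
    χ.tsupport_eq ▸ (closedBall_subset_ball (show r / 2 < r by linarith)).trans hrW
  set H := fun z => χ z • g z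
  have hH : ContDiff ℝ (⊤ : ℕ∞) H := contDiff_smul_of_tsupport_subset hW χ.contDiff hg hχW
  have hHdiag : ∀ y, H (y, y) = 0 := fun y => by
    by_cases hy : (y, y) ∈ W
    · simp [H, hdiag y hy]
    · simp [H, image_eq_zero_of_notMem_tsupport (mt (hχW ·) hy)]
  refine ⟨ball (x, x) (r / 3), (ball_subset_ball (by linarith)).trans hrW, isOpen_ball,
    mem_ball_self (by positivity), fun j q => diagonalHadamardKernel H q (Pi.single j 1, 0),
    fun j => ((contDiff_diagonalHadamardKernel hH le_top).clm_apply contDiff_const).contDiffOn,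
    fun q hq => ?_⟩
  calc g q = H q := by simp [H, χ.one_of_mem_closedBall (ball_subset_closedBall hq)]
    _ = diagonalHadamardKernel H q (q.1 - q.2, 0) :=
      eq_diagonalHadamardKernel_apply (hH.of_le (by exact_mod_cast le_top)) hHdiag q
    _ = _ := by
      rw [ContinuousLinearMap.apply_inl_eq_sum]
      simp only [Algebra.smul_def, Pi.sub_apply]
end

section
/- Let k be a field, let R and A be commutative k-algebras, let J ⊆ R and n ⊆ A be ideals, and let q, h ≥ 0 be integers with J^{q+1} = 0, J^q ≠ 0, n^{h+1} = 0 and n^h ≠ 0. In B := R ⊗_k A, let I be the ideal generated by the images of J and of n under the canonical k-algebra maps R → B (r ↦ r ⊗ 1) and A → B (a ↦ 1 ⊗ a). Then I^{q+h+1} = 0 and I^{q+h} ≠ 0. Moreover, if instead of the nilpotency of J one only assumes ⋂_{N ≥ 1} J^N = 0, and A is finite-dimensional as a k-vector space with n nilpotent, then ⋂_{N ≥ 1} I^N = 0. -/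
/-!
Write `B = R ⊗[k] A`, `P = J·B`, `Q = n·B`, so `I = P ⊔ Q`. In the binomial expansion of
`(P + Q)^(q+h+1)` every term lies in `P^(q+1)` or in `Q^(h+1)`, so it vanishes. Conversely, for
nonzero `x ∈ J^q` and `y ∈ n^h` the element `x ⊗ y = (x ⊗ 1)(1 ⊗ y)` lies in `I^(q+h)`, and it
is nonzero because a tensor product of nonzero vectors over a field is nonzero.

For the intersection, `n^m = 0` gives `I^(N+m) ⊆ J^(N+1)·B`. A `k`-basis of `A` makes `B` a free
`R`-module in which every element of `K·B` has all its coordinates in `K`; an element of every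
`I^N` therefore has all its coordinates in `⋂ J^N = 0`.
-/

open TensorProduct

lemma Ideal.sup_pow_add_add_one_le {R : Type*} [CommSemiring R] (I J : Ideal R) (a b : ℕ) :
    (I ⊔ J) ^ (a + b + 1) ≤ I ^ (a + 1) ⊔ J ^ (b + 1) := by
  rw [← Ideal.add_eq_sup, ← Ideal.add_eq_sup, add_pow, Ideal.sum_eq_sup]
  refine Finset.sup_le fun i hi => ?_
  by_cases ha : a + 1 ≤ i
  · exact Ideal.mul_le_left.trans (Ideal.mul_le_left.trans
      ((Ideal.pow_le_pow_right ha).trans le_sup_left))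
  · refine Ideal.mul_le_left.trans (Ideal.mul_le_right.trans
      ((Ideal.pow_le_pow_right ?_).trans le_sup_right))
    rw [Finset.mem_range] at hi
    omega

lemma TensorProduct.tmul_ne_zero {k M N : Type*} [CommRing k] [IsDomain k]
    [AddCommGroup M] [Module k M] [Module.Free k M] [AddCommGroup N] [Module k N] [Module.Free k N]
    {x : M} {y : N} (hx : x ≠ 0) (hy : y ≠ 0) : x ⊗ₜ[k] y ≠ 0 := by
  set b := Module.Free.chooseBasis k M
  set c := Module.Free.chooseBasis k N
  obtain ⟨i, hi⟩ := Finsupp.ne_iff.mp ((b.repr.map_ne_zero_iff).mpr hx)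
  obtain ⟨j, hj⟩ := Finsupp.ne_iff.mp ((c.repr.map_ne_zero_iff).mpr hy)
  intro h
  have := congrArg (fun z => (b.tensorProduct c).repr z (i, j)) h
  simp only [Module.Basis.tensorProduct_repr_tmul_apply, smul_eq_mul, map_zero,
    Finsupp.coe_zero, Pi.zero_apply] at this
  exact mul_ne_zero hj hi this

namespace Algebra.TensorProduct

variable {k R A : Type*} [CommSemiring k] [CommSemiring R] [Algebra k R]

lemma basis_repr_mem_of_mem_map_includeLeft [Semiring A] [Algebra k A] {ι : Type*}
    (b : Module.Basis ι k A) {K : Ideal R} {z : R ⊗[k] A}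
    (hz : z ∈ K.map (includeLeftRingHom : R →+* R ⊗[k] A)) (i : ι) :
    (basis R b).repr z i ∈ K := by
  have hz' : z ∈ (K.map (includeLeft : R →ₐ[k] R ⊗[k] A)).restrictScalars k := hz
  rw [Ideal.map_includeLeft_eq] at hz'
  obtain ⟨w, rfl⟩ := hz'
  clear hz
  induction w using TensorProduct.induction_on with
  | zero => simp
  | tmul x a =>
    simpa [Algebra.smul_def] using K.mul_mem_right _ x.2
  | add v w hv hw => simpa using K.add_mem hv hw

lemma iInf_map_includeLeft_eq_bot [Semiring A] [Algebra k A] [Module.Free k A] {ι : Sort*}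
    (K : ι → Ideal R) (hK : ⨅ i, K i = ⊥) :
    ⨅ i, (K i).map (includeLeftRingHom : R →+* R ⊗[k] A) = ⊥ := by
  let b := Module.Free.chooseBasis k A
  refine eq_bot_iff.mpr fun z hz => ?_
  rw [Ideal.mem_bot, ← (basis R b).repr.map_eq_zero_iff]
  ext i
  have : (basis R b).repr z i ∈ ⨅ j, K j := Submodule.mem_iInf _ |>.mpr fun j =>
    basis_repr_mem_of_mem_map_includeLeft b (Submodule.mem_iInf _ |>.mp hz j) i
  simpa [hK] using this

lemma tmul_mem_sup_map_pow_add [CommSemiring A] [Algebra k A] {J : Ideal R} {n : Ideal A}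
    {q h : ℕ} {x : R} {y : A} (hx : x ∈ J ^ q) (hy : y ∈ n ^ h) :
    x ⊗ₜ[k] y ∈ (J.map (includeLeftRingHom : R →+* R ⊗[k] A) ⊔
      n.map (includeRight : A →ₐ[k] R ⊗[k] A).toRingHom) ^ (q + h) := by
  rw [pow_add, ← mul_one x, ← one_mul y, ← tmul_mul_tmul]
  refine Ideal.mul_mem_mul (Ideal.pow_right_mono le_sup_left q ?_)
    (Ideal.pow_right_mono le_sup_right h ?_)
  · rw [← Ideal.map_pow]
    exact Ideal.mem_map_of_mem _ hx
  · rw [← Ideal.map_pow]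
    exact Ideal.mem_map_of_mem _ hy

end Algebra.TensorProduct

/-- Girth of Weil thickenings, algebraic form. Let `J ⊆ R`, `n ⊆ A` be ideals of
commutative `k`-algebras and let `I` be the ideal of `R ⊗[k] A` generated by the images of
`J` and `n`. If `J` has exact nilpotency order `q` and `n` has exact nilpotency order `h`,
then `I` has exact nilpotency order `q + h`. Moreover, if instead `⋂_{N≥1} J^N = 0`, `A` is
finite-dimensional over `k` and `n` is nilpotent, then `⋂_{N≥1} I^N = 0`. -/
theorem tensor_ideal_girth {k : Type*} [Field k] {R A : Type*}
    [CommRing R] [CommRing A] [Algebra k R] [Algebra k A]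
    (J : Ideal R) (n : Ideal A) (q h : ℕ)
    (I : Ideal (R ⊗[k] A))
    (hI : I = Ideal.map (Algebra.TensorProduct.includeLeftRingHom : R →+* R ⊗[k] A) J ⊔
        Ideal.map (Algebra.TensorProduct.includeRight : A →ₐ[k] R ⊗[k] A).toRingHom n) :
    ((J ^ (q + 1) = ⊥ ∧ J ^ q ≠ ⊥ ∧ n ^ (h + 1) = ⊥ ∧ n ^ h ≠ ⊥) →
      I ^ (q + h + 1) = ⊥ ∧ I ^ (q + h) ≠ ⊥) ∧
    (((⨅ N : ℕ, J ^ (N + 1)) = ⊥ ∧ FiniteDimensional k A ∧ (∃ m : ℕ, n ^ m = ⊥)) →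
      (⨅ N : ℕ, I ^ (N + 1)) = ⊥) := by
  set f := (Algebra.TensorProduct.includeLeftRingHom : R →+* R ⊗[k] A)
  set g := (Algebra.TensorProduct.includeRight : A →ₐ[k] R ⊗[k] A).toRingHom
  subst hI
  refine ⟨fun ⟨hJ, hJq, hn, hnh⟩ => ⟨?_, fun hbot => ?_⟩, fun ⟨hJ, _, m, hm⟩ => ?_⟩
  · refine eq_bot_iff.mpr ((Ideal.sup_pow_add_add_one_le _ _ q h).trans ?_)
    simp [← Ideal.map_pow, hJ, hn]
  · obtain ⟨x, hx, hx0⟩ := Submodule.exists_mem_ne_zero_of_ne_bot hJq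
    obtain ⟨y, hy, hy0⟩ := Submodule.exists_mem_ne_zero_of_ne_bot hnh
    exact tmul_ne_zero hx0 hy0
      (Ideal.mem_bot.mp (hbot ▸ Algebra.TensorProduct.tmul_mem_sup_map_pow_add hx hy))
  · have hpow (N : ℕ) : (J.map f ⊔ n.map g) ^ (N + 1 + m) ≤ (J ^ (N + 1)).map f := by
      refine Ideal.sup_pow_add_le_pow_sup_pow.trans ?_
      simp [← Ideal.map_pow, hm]
    refine eq_bot_iff.mpr (le_trans ?_ (Algebra.TensorProduct.iInf_map_includeLeft_eq_bot _ hJ).le)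
    exact le_iInf fun N => (iInf_le _ (N + m)).trans (by simpa [add_right_comm] using hpow N)
end

section
/- Let k be a field and let A be a finite-dimensional commutative local k-algebra whose residue field is k, i.e. A = k·1 ⊕ m_A where m_A is the maximal ideal of A (which is then nilpotent). Let R be a commutative local k-algebra with maximal ideal m_R such that the quotient ring R/(⋂_{N ≥ 1} m_R^N) is Noetherian. Then B := R ⊗_k A is a local ring whose maximal ideal is m_B = m_R·B + m_A·B (the ideal generated by the images of m_R and m_A under the canonical maps R → B and A → B), and the quotient ring B/(⋂_{N ≥ 1} m_B^N) is Noetherian. -/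
open TensorProduct IsLocalRing

set_option maxHeartbeats 1000000
set_option synthInstance.maxHeartbeats 200000

/-- Weil thickenings of formally Noetherian local algebras are formally Noetherian:
if `A` is a finite-dimensional commutative local `k`-algebra with residue field `k`
(a Weil `k`-algebra) and `R` is a commutative local `k`-algebra such that
`R/(⋂_{N≥1} m_R^N)` is Noetherian, then `B := R ⊗[k] A` is a local ring whose maximal
ideal is the ideal generated by the images of `m_R` and `m_A`, and `B/(⋂_{N≥1} m_B^N)`
is Noetherian. -/
theorem weil_thickening_formally_noetherian {k : Type*} [Field k]
    (A : Type*) [CommRing A] [Algebra k A] [IsLocalRing A] [FiniteDimensional k A]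
    (hA : Function.Bijective ((residue A).comp (algebraMap k A)))
    (R : Type*) [CommRing R] [Algebra k R] [IsLocalRing R]
    (hR : IsNoetherianRing (R ⧸ (⨅ N : ℕ, (maximalIdeal R) ^ (N + 1))))
    (mB : Ideal (R ⊗[k] A))
    (hmB : mB = Ideal.map (Algebra.TensorProduct.includeLeftRingHom : R →+* R ⊗[k] A)
        (maximalIdeal R) ⊔
      Ideal.map (Algebra.TensorProduct.includeRight : A →ₐ[k] R ⊗[k] A).toRingHom
        (maximalIdeal A)) :
    IsLocalRing (R ⊗[k] A) ∧
    mB.IsMaximal ∧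
    IsNoetherianRing ((R ⊗[k] A) ⧸ (⨅ N : ℕ, mB ^ (N + 1))) := by
  classical
  -- `A` is Artinian local, so its maximal ideal is nilpotent.
  haveI : IsArtinianRing A := IsArtinianRing.of_finite k A
  have hnilp : IsNilpotent (maximalIdeal A) := by
    have := IsArtinianRing.isNilpotent_jacobson_bot (R := A)
    rwa [IsLocalRing.jacobson_eq_maximalIdeal ⊥ bot_ne_top] at this
  obtain ⟨n, hn⟩ := hnilp
  -- The residue field of `A` is `k`; build the augmentation `ε : A → k`.
  let e : k ≃+* ResidueField A := RingEquiv.ofBijective _ hA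
  let ε : A →+* k := (e.symm : ResidueField A →+* k).comp (residue A)
  have hε1 : ∀ a : A, residue A (algebraMap k A (ε a)) = residue A a := fun a =>
    e.apply_symm_apply (residue A a)
  have hε0 : ∀ a ∈ maximalIdeal A, ε a = 0 := by
    intro a ha
    have : residue A a = 0 := Ideal.Quotient.eq_zero_iff_mem.mpr ha
    simp [ε, this]
  have hεc : ∀ c : k, ε (algebraMap k A c) = c := fun c => e.symm_apply_apply c
  let εₐ : A →ₐ[k] k := { toRingHom := ε, commutes' := fun c => hεc c }
  -- The retraction `φ : R ⊗[k] A → R`.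
  let φ : R ⊗[k] A →ₐ[k] R :=
    Algebra.TensorProduct.productMap (AlgHom.id k R) ((Algebra.ofId k R).comp εₐ)
  have hφR : ∀ r : R, φ (Algebra.TensorProduct.includeLeftRingHom r) = r := by
    intro r
    simp [φ, Algebra.TensorProduct.includeLeftRingHom_apply]
  have hφtmul : ∀ (r : R) (a : A), φ (r ⊗ₜ[k] a) = r * algebraMap k R (ε a) := by
    intro r a
    simp [φ, Algebra.TensorProduct.productMap_apply_tmul, Algebra.ofId_apply, εₐ]
  set MA : Ideal (R ⊗[k] A) :=
    Ideal.map (Algebra.TensorProduct.includeRight : A →ₐ[k] R ⊗[k] A).toRingHom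
      (maximalIdeal A) with hMAdef
  have hφA0 : ∀ a ∈ maximalIdeal A,
      φ ((Algebra.TensorProduct.includeRight : A →ₐ[k] R ⊗[k] A) a) = 0 := by
    intro a ha
    have : φ ((1 : R) ⊗ₜ[k] a) = 1 * algebraMap k R (ε a) := hφtmul 1 a
    rw [Algebra.TensorProduct.includeRight_apply, this, hε0 a ha, map_zero, one_mul]
  -- Key decomposition: every `x` equals `ιR (φ x)` modulo `MA`.
  have key : ∀ x : R ⊗[k] A,
      x - Algebra.TensorProduct.includeLeftRingHom (φ x) ∈ MA := by
    intro x
    induction x using TensorProduct.induction_on with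
    | zero => simp
    | tmul r a =>
      have hm : a - algebraMap k A (ε a) ∈ maximalIdeal A := by
        have h0 : residue A (a - algebraMap k A (ε a)) = 0 := by
          rw [map_sub, hε1, sub_self]
        exact Ideal.Quotient.eq_zero_iff_mem.mp h0
      have hmem : r ⊗ₜ[k] (a - algebraMap k A (ε a)) ∈ MA := by
        have h1 : ((1:R) ⊗ₜ[k] (a - algebraMap k A (ε a))) ∈ MA :=
          Ideal.mem_map_of_mem _ hm
        have h2 := Ideal.mul_mem_left MA (r ⊗ₜ[k] (1:A)) h1
        have h3 : r ⊗ₜ[k] (a - algebraMap k A (ε a))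
            = (r ⊗ₜ[k] (1:A)) * ((1:R) ⊗ₜ[k] (a - algebraMap k A (ε a))) := by
          rw [Algebra.TensorProduct.tmul_mul_tmul, mul_one, one_mul]
        rw [h3]; exact h2
      have heq : r ⊗ₜ[k] a - Algebra.TensorProduct.includeLeftRingHom (φ (r ⊗ₜ[k] a))
          = r ⊗ₜ[k] (a - algebraMap k A (ε a)) := by
        rw [hφtmul, TensorProduct.tmul_sub]
        congr 1
        rw [Algebra.TensorProduct.includeLeftRingHom_apply,
          Algebra.algebraMap_eq_smul_one (A := A), TensorProduct.tmul_smul, smul_tmul',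
          Algebra.smul_def, mul_comm]
      rw [heq]; exact hmem
    | add x y hx hy =>
      have : (x + y) - Algebra.TensorProduct.includeLeftRingHom (φ (x + y))
          = (x - Algebra.TensorProduct.includeLeftRingHom (φ x))
            + (y - Algebra.TensorProduct.includeLeftRingHom (φ y)) := by
        rw [map_add, map_add]; ring
      rw [this]; exact MA.add_mem hx hy
  -- `MA` is nilpotent.
  have hMA : MA ^ n = ⊥ := by
    rw [hMAdef, ← Ideal.map_pow, hn, Ideal.zero_eq_bot, Ideal.map_bot]
  -- Units lift along `φ`.
  have hunit : ∀ x : R ⊗[k] A, IsUnit (φ x) → IsUnit x := by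
    intro x hx
    obtain ⟨u, hu⟩ := hx
    set y := (Algebra.TensorProduct.includeLeftRingHom : R →+* R ⊗[k] A) (↑u⁻¹ : R) with hy
    have hφxy : φ (x * y) = 1 := by
      rw [map_mul, hy, hφR, ← hu, Units.mul_inv]
    have hmem : x * y - 1 ∈ MA := by
      have h := key (x * y)
      rwa [hφxy, map_one] at h
    have hnil : IsNilpotent (x * y - 1) := by
      refine ⟨n, ?_⟩
      have := Ideal.pow_mem_pow hmem n
      rw [hMA] at this
      simpa using this
    have hxyu : IsUnit (x * y) := by
      have h := hnil.isUnit_add_one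
      simpa using h
    exact isUnit_of_mul_isUnit_left hxyu
  haveI : Nontrivial (R ⊗[k] A) := φ.toRingHom.domain_nontrivial
  -- Locality.
  have hloc : IsLocalRing (R ⊗[k] A) := by
    refine IsLocalRing.of_isUnit_or_isUnit_one_sub_self fun x => ?_
    rcases IsLocalRing.isUnit_or_isUnit_one_sub_self (φ x) with h | h
    · exact Or.inl (hunit x h)
    · exact Or.inr (hunit _ (by rwa [map_sub, map_one]))
  have hsurj : Function.Surjective φ.toRingHom := fun r =>
    ⟨Algebra.TensorProduct.includeLeftRingHom r, hφR r⟩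
  -- `mB` is the preimage of the maximal ideal of `R` under `φ`, hence maximal.
  have hcomap : mB = Ideal.comap φ.toRingHom (maximalIdeal R) := by
    apply le_antisymm
    · rw [hmB]
      apply sup_le
      · rw [Ideal.map_le_iff_le_comap]
        intro r hr
        have : φ (Algebra.TensorProduct.includeLeftRingHom r) ∈ maximalIdeal R := by
          rw [hφR]; exact hr
        exact this
      · rw [Ideal.map_le_iff_le_comap]
        intro a ha
        have : φ ((Algebra.TensorProduct.includeRight : A →ₐ[k] R ⊗[k] A) a)
            ∈ maximalIdeal R := by
          rw [hφA0 a ha]; exact (maximalIdeal R).zero_mem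
        exact this
    · intro x hx
      have hx' : φ x ∈ maximalIdeal R := hx
      have h1 : Algebra.TensorProduct.includeLeftRingHom (φ x) ∈ mB := by
        rw [hmB]; exact Ideal.mem_sup_left (Ideal.mem_map_of_mem _ hx')
      have h2 : x - Algebra.TensorProduct.includeLeftRingHom (φ x) ∈ mB := by
        rw [hmB]; exact Ideal.mem_sup_right (key x)
      have := add_mem h2 h1
      simpa using this
  have hmax : mB.IsMaximal := by
    rw [hcomap]
    exact Ideal.comap_isMaximal_of_surjective φ.toRingHom hsurj
  -- The Noetherian property of the formal quotient.
  refine ⟨hloc, hmax, ?_⟩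
  have halg : (algebraMap R (R ⊗[k] A)) =
      (Algebra.TensorProduct.includeLeftRingHom : R →+* R ⊗[k] A) := rfl
  set I : Ideal R := ⨅ N : ℕ, (maximalIdeal R) ^ (N + 1) with hIdef
  set J : Ideal (R ⊗[k] A) := ⨅ N : ℕ, mB ^ (N + 1) with hJdef
  let g : R →+* (R ⊗[k] A) ⧸ J := (Ideal.Quotient.mk J).comp (algebraMap R (R ⊗[k] A))
  have hIg : ∀ r ∈ I, g r = 0 := by
    intro r hr
    have hmem : algebraMap R (R ⊗[k] A) r ∈ J := by
      rw [hJdef]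
      refine Submodule.mem_iInf _ |>.mpr fun N => ?_
      have hrN : r ∈ maximalIdeal R ^ (N + 1) := Submodule.mem_iInf _ |>.mp hr N
      have h1 : algebraMap R (R ⊗[k] A) r ∈
          Ideal.map (Algebra.TensorProduct.includeLeftRingHom : R →+* R ⊗[k] A)
            (maximalIdeal R ^ (N + 1)) := by
        rw [halg] at *
        exact Ideal.mem_map_of_mem _ hrN
      rw [Ideal.map_pow] at h1
      have hle : (Ideal.map (Algebra.TensorProduct.includeLeftRingHom : R →+* R ⊗[k] A)
          (maximalIdeal R)) ^ (N + 1) ≤ mB ^ (N + 1) := by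
        rw [hmB]
        exact Ideal.pow_right_mono le_sup_left (N + 1)
      exact hle h1
    show Ideal.Quotient.mk J (algebraMap R (R ⊗[k] A) r) = 0
    exact Ideal.Quotient.eq_zero_iff_mem.mpr hmem
  let f : R ⧸ I →+* (R ⊗[k] A) ⧸ J := Ideal.Quotient.lift I g hIg
  letI : Algebra (R ⧸ I) ((R ⊗[k] A) ⧸ J) := f.toAlgebra
  haveI : IsScalarTower R (R ⧸ I) ((R ⊗[k] A) ⧸ J) :=
    IsScalarTower.of_algebraMap_eq fun r => rfl
  haveI hfinB : Module.Finite R (R ⊗[k] A) := inferInstance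
  haveI : Module.Finite R ((R ⊗[k] A) ⧸ J) :=
    Module.Finite.of_surjective (Ideal.Quotient.mkₐ R J).toLinearMap
      (Ideal.Quotient.mkₐ_surjective R J)
  haveI : Module.Finite (R ⧸ I) ((R ⊗[k] A) ⧸ J) :=
    Module.Finite.of_restrictScalars_finite R _ _
  haveI : IsNoetherianRing (R ⧸ I) := hR
  haveI : IsNoetherian (R ⧸ I) ((R ⊗[k] A) ⧸ J) :=
    isNoetherian_of_isNoetherianRing_of_finite _ _
  exact isNoetherianRing_iff.mpr
    (isNoetherian_of_tower (R ⧸ I) (inferInstance : IsNoetherian (R ⧸ I) ((R ⊗[k] A) ⧸ J)))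
end
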